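/- arXiv:1301.6251 — 8 statements merged into one kernel-verified Lean document; each statement's English description precedes it below -/
import Mathlib

section
/- The m = n − φ(n) rational functions w_0,…,w_{m−1} ∈ k(X), defined by w_j = u_{0+j}^{c_0} u_{1+j}^{c_1} ⋯ u_{φ(n)+j}^{c_{φ(n)}} (indices of the u's taken mod n), are algebraically independent over k. -/
open MvPolynomial

/-- The linear form `u_j = Σ_i ε^{ij} x_i`, viewed in the rational function field
`k(x_0,…,x_{n-1})` (the fraction field of the polynomial ring). -/
noncomputable def uForm {k : Type*} [Field k] (n : ℕ) [NeZero n] (ε : k) (j : ZMod n) :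
    FractionRing (MvPolynomial (ZMod n) k) :=
  algebraMap (MvPolynomial (ZMod n) k) (FractionRing (MvPolynomial (ZMod n) k))
    (∑ i : ZMod n, C (ε ^ (i * j).val) * X i)

/-- The rational monomial `w_j = u_j^{c_0} u_{j+1}^{c_1} ⋯ u_{j+φ(n)}^{c_{φ(n)}},`
where `c_0,…,c_{φ(n)}` are the coefficients of the `n`-th cyclotomic polynomial. -/
noncomputable def wMonomial {k : Type*} [Field k] (n : ℕ) [NeZero n] (ε : k) (j : ℕ) :
    FractionRing (MvPolynomial (ZMod n) k) :=
  ∏ i ∈ Finset.range (n.totient + 1),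
    uForm n ε ((i : ZMod n) + (j : ZMod n)) ^ ((Polynomial.cyclotomic n ℤ).coeff i)

/-!
The `u_j` are the discrete Fourier transform of the variables: the matrix `(ε^{ij})` has inverse
`n⁻¹ (ε^{-ij})`, so the `u_j` are algebraically independent. Each `w_j` is a Laurent monomial
`∏_t u_t ^ e_{j,t}` whose exponent vector is the coefficient vector of `t^j Φ_n(t)`; since
`j + φ(n) < n` there is no wrap-around modulo `n`, and these vectors are `ℤ`-linearly independent
because `Φ_n ≠ 0`. Finally, Laurent monomials in algebraically independent elements with linearly
independent exponent vectors are algebraically independent: distinct monomials in the `w_j` become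
distinct Laurent monomials in the `u_t`, and finitely many of those are linearly independent, as
multiplying by one monomial turns them into distinct ordinary monomials.
-/

open Finset

theorem Finset.prod_zpow_eq_zpow_sum₀ {α G₀ : Type*} [CommGroupWithZero G₀] {a : G₀} (ha : a ≠ 0)
    (s : Finset α) (f : α → ℤ) : ∏ i ∈ s, a ^ f i = a ^ ∑ i ∈ s, f i := by
  induction s using Finset.cons_induction with
  | empty => simp
  | cons i s _ ih => rw [prod_cons, sum_cons, ih, zpow_add₀ ha]

theorem ZMod.prod_univ_eq_prod_range {M : Type*} [CommMonoid M] (n : ℕ) [NeZero n]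
    (f : ZMod n → M) : ∏ t, f t = ∏ t ∈ range n, f t :=
  prod_nbij' ZMod.val (↑) (fun t _ => mem_range.2 (ZMod.val_lt t)) (fun _ _ => mem_univ _)
    (fun t _ => ZMod.natCast_zmod_val t) (fun _ ht => ZMod.val_natCast_of_lt (mem_range.1 ht))
    (fun t _ => by rw [ZMod.natCast_zmod_val])

namespace MvPolynomial

variable {R σ : Type*} [CommRing R]

theorem algebraicIndependent_of_aeval_eq_X {P Q : σ → MvPolynomial σ R}
    (h : ∀ j, aeval Q (P j) = X j) : AlgebraicIndependent R P := by
  have hQP : (aeval Q).comp (aeval P) = AlgHom.id R (MvPolynomial σ R) :=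
    algHom_ext fun j => by rw [AlgHom.comp_apply, aeval_X, h, AlgHom.id_apply]
  exact Function.LeftInverse.injective (g := aeval Q) fun p => by
    rw [← AlgHom.comp_apply, hQP, AlgHom.id_apply]

theorem algebraicIndependent_sum_C_mul_X_of_mul_eq_one [Fintype σ] [DecidableEq σ]
    {A B : Matrix σ σ R} (hAB : A * B = 1) :
    AlgebraicIndependent R fun j => ∑ i, C (A j i) * X i := by
  refine algebraicIndependent_of_aeval_eq_X (Q := fun i => ∑ l, C (B i l) * X l) fun j => ?_
  calc aeval (fun i => ∑ l, C (B i l) * X l) (∑ i, C (A j i) * X i : MvPolynomial σ R)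
      = ∑ l, C ((A * B) j l) * X l := by
        simp only [map_sum, map_mul, aeval_C, aeval_X, algebraMap_eq, mul_sum, Matrix.mul_apply,
          sum_mul, mul_assoc]
        exact sum_comm
    _ = X j := by simp [hAB, Matrix.one_apply]

end MvPolynomial

theorem algebraicIndependent_iff_linearIndependent_aeval_monomial {R A σ : Type*} [CommRing R]
    [CommRing A] [Algebra R A] {x : σ → A} :
    AlgebraicIndependent R x ↔
      LinearIndependent R fun d : σ →₀ ℕ => aeval x (monomial d (1 : R)) := by
  have hcomp : (fun d : σ →₀ ℕ => aeval x (monomial d (1 : R))) =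
      (aeval x).toLinearMap ∘ MvPolynomial.basisMonomials σ R := by
    rw [MvPolynomial.coe_basisMonomials]; rfl
  rw [hcomp]
  exact ⟨fun hx => (MvPolynomial.basisMonomials σ R).linearIndependent.map'
      _ (LinearMap.ker_eq_bot.2 hx),
    fun h => LinearMap.injective_of_linearIndependent (MvPolynomial.basisMonomials σ R).span_eq h⟩

theorem AddChar.IsPrimitive.algebraicIndependent_sum_C_mul_X {R k : Type*} [CommRing R]
    [Fintype R] [DecidableEq R] [Field k] {ψ : AddChar R k} (hψ : ψ.IsPrimitive)
    (hR : (Fintype.card R : k) ≠ 0) :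
    AlgebraicIndependent k fun j : R => ∑ i, C (ψ (i * j)) * X i := by
  refine MvPolynomial.algebraicIndependent_sum_C_mul_X_of_mul_eq_one
    (A := Matrix.of fun j i => ψ (i * j))
    (B := Matrix.of fun i l => (Fintype.card R : k)⁻¹ * ψ (-(i * l))) ?_
  ext j l
  calc ∑ i, ψ (i * j) * ((Fintype.card R : k)⁻¹ * ψ (-(i * l)))
      = (Fintype.card R : k)⁻¹ * ∑ i, ψ (i * (j - l)) := by
        rw [mul_sum]
        refine sum_congr rfl fun i _ => ?_
        rw [mul_left_comm, ← AddChar.map_add_eq_mul, mul_sub, sub_eq_add_neg]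
    _ = (1 : Matrix R R k) j l := by
        rw [AddChar.sum_mulShift _ hψ, Matrix.one_apply]
        simp [sub_eq_zero, apply_ite, hR]

namespace AlgebraicIndependent

variable {R F ι : Type*} [CommRing R] [Nontrivial R] [Field F] [Algebra R F] [Fintype ι]
  {u : ι → F}

theorem linearIndependent_prod_zpow (hu : AlgebraicIndependent R u) :
    LinearIndependent R fun e : ι → ℤ => ∏ i, u i ^ e i := by
  rw [linearIndependent_iff_finset_linearIndependent]
  intro s
  obtain ⟨N, hN⟩ : ∃ N : ι → ℕ, ∀ e ∈ s, ∀ i, 0 ≤ e i + N i :=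
    ⟨fun i => s.sup fun e => (e i).natAbs, fun e he i => by
      dsimp only
      have := le_sup (f := fun e : ι → ℤ => (e i).natAbs) he
      omega⟩
  set D : s → ι →₀ ℕ := fun e => Finsupp.equivFunOnFinite.symm fun i => (e.1 i + N i).toNat
  have hD : Function.Injective D := fun e e' h => Subtype.ext <| funext fun i => by
    have := congrArg (· i) h
    simp only [D, Finsupp.coe_equivFunOnFinite_symm] at this
    have := hN e e.2 i
    have := hN e' e'.2 i
    omega
  set c : F := ∏ i, u i ^ (-(N i : ℤ))
  have hc : LinearMap.ker (LinearMap.mulLeft R c) = ⊥ :=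
    LinearMap.ker_eq_bot.2 <| mul_right_injective₀ <|
      prod_ne_zero_iff.2 fun i _ => zpow_ne_zero _ (hu.ne_zero i)
  have hcomp : (fun e : ι → ℤ => ∏ i, u i ^ e i) ∘ ((↑) : s → ι → ℤ) =
      LinearMap.mulLeft R c ∘ (fun d => aeval u (monomial d (1 : R))) ∘ D := by
    funext e
    simp only [Function.comp_apply, LinearMap.mulLeft_apply, aeval_monomial, map_one, one_mul,
      Finsupp.prod_fintype _ _ (fun i => pow_zero (u i)), D, Finsupp.coe_equivFunOnFinite_symm, c,
      ← prod_mul_distrib]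
    refine prod_congr rfl fun i _ => ?_
    rw [← zpow_natCast, Int.toNat_of_nonneg (hN e e.2 i), ← zpow_add₀ (hu.ne_zero i),
      neg_add_cancel_comm_assoc]
  rw [hcomp]
  exact ((algebraicIndependent_iff_linearIndependent_aeval_monomial.1 hu).comp D hD).map' _ hc

theorem prod_zpow_of_linearIndependent {κ : Type*} [Fintype κ] (hu : AlgebraicIndependent R u)
    {v : κ → ι → ℤ} (hv : LinearIndependent ℤ v) :
    AlgebraicIndependent R fun j => ∏ i, u i ^ v j i := by
  set E : (κ →₀ ℕ) → ι → ℤ := fun d => ∑ j, (d j : ℤ) • v j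
  have hE : Function.Injective E := fun d d' h => by
    have := Fintype.linearIndependent_iff.1 hv (fun j => (d j : ℤ) - d' j) <| by
      simpa only [sub_smul, sum_sub_distrib, sub_eq_zero] using h
    ext j
    simpa [sub_eq_zero] using this j
  have hcomp : (fun d => aeval (fun j => ∏ i, u i ^ v j i) (monomial d (1 : R))) =
      (fun e : ι → ℤ => ∏ i, u i ^ e i) ∘ E := by
    funext d
    rw [aeval_monomial, map_one, one_mul, Finsupp.prod_fintype _ _ fun j => pow_zero _]
    simp only [Function.comp_apply, E, ← prod_pow, Finset.sum_apply, Pi.smul_apply, smul_eq_mul]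
    rw [prod_comm]
    refine prod_congr rfl fun i _ => ?_
    rw [← prod_zpow_eq_zpow_sum₀ (hu.ne_zero i)]
    refine prod_congr rfl fun j _ => ?_
    rw [← zpow_natCast, ← zpow_mul, mul_comm]
  rw [algebraicIndependent_iff_linearIndependent_aeval_monomial, hcomp]
  exact hu.linearIndependent_prod_zpow.comp E hE

end AlgebraicIndependent

open Polynomial in
theorem Polynomial.linearIndependent_coeff_X_pow_mul {R : Type*} [CommRing R] [IsDomain R]
    {f : R[X]} (hf : f ≠ 0) {m n : ℕ} (hmn : f.natDegree + m ≤ n) :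
    LinearIndependent R fun (j : Fin m) (t : ZMod n) => (X ^ (j : ℕ) * f).coeff t.val := by
  rw [Fintype.linearIndependent_iff]
  intro a ha
  set q : R[X] := ∑ j, C (a j) * X ^ (j : ℕ)
  have hcoeff : ∀ t, (q * f).coeff t = ∑ j, a j * (X ^ (j : ℕ) * f).coeff t := fun t => by
    simp only [q, sum_mul, finsetSum_coeff, mul_assoc, coeff_C_mul]
  have hqf : q * f = 0 := by
    ext t
    rw [coeff_zero, hcoeff]
    by_cases ht : t < n
    · simpa [ZMod.val_natCast_of_lt ht] using congrFun ha t
    · refine sum_eq_zero fun j _ => ?_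
      rw [coeff_eq_zero_of_natDegree_lt, mul_zero]
      calc (X ^ (j : ℕ) * f).natDegree ≤ j + f.natDegree :=
            natDegree_mul_le.trans (by rw [natDegree_X_pow])
        _ < t := by omega
  have hq : q = 0 := (mul_eq_zero.1 hqf).resolve_right hf
  intro j
  simpa [q, finsetSum_coeff, coeff_C_mul_X_pow, Fin.val_inj] using congrArg (coeff · j) hq

open Polynomial in
theorem Polynomial.prod_zpow_coeff_X_pow_mul {M : Type*} [DivisionCommMonoid M] {n : ℕ} [NeZero n]
    (g : ZMod n → M) (f : ℤ[X]) {j : ℕ} (hj : j + f.natDegree < n) :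
    ∏ t : ZMod n, g t ^ (X ^ j * f : ℤ[X]).coeff t.val =
      ∏ i ∈ range (f.natDegree + 1), g (i + j) ^ f.coeff i := by
  have hsub : (range (f.natDegree + 1)).map (addRightEmbedding j) ⊆ range n := fun t ht => by
    simp only [mem_map, mem_range, addRightEmbedding_apply] at ht ⊢
    omega
  rw [ZMod.prod_univ_eq_prod_range, prod_congr rfl fun t ht => by
      rw [ZMod.val_natCast_of_lt (mem_range.1 ht)], ← prod_subset hsub, prod_map]
  · refine prod_congr rfl fun i _ => ?_
    rw [addRightEmbedding_apply, coeff_X_pow_mul, Nat.cast_add]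
  · intro t _ ht
    simp only [mem_map, mem_range, addRightEmbedding_apply, not_exists, not_and] at ht
    rw [coeff_X_pow_mul', ite_eq_right_iff.2 fun hjt => coeff_eq_zero_of_natDegree_lt ?_, zpow_zero]
    by_contra! h
    exact ht (t - j) (by omega) (by omega)

theorem stmt_4_general {k : Type*} [Field k] (n : ℕ) [NeZero n]
    (ε : k) (hε : IsPrimitiveRoot ε n) :
    AlgebraicIndependent k (fun j : Fin (n - n.totient) => wMonomial n ε (j : ℕ)) := by
  have hdeg : (Polynomial.cyclotomic n ℤ).natDegree = n.totient :=
    Polynomial.natDegree_cyclotomic n ℤ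
  have hφ : n.totient ≤ n := Nat.totient_le n
  have hu : AlgebraicIndependent k (uForm n ε) :=
    ((AddChar.zmodChar_primitive_of_primitive_root n hε).algebraicIndependent_sum_C_mul_X
      (by rw [ZMod.card]; exact hε.neZero'.out)).map'
      (f := IsScalarTower.toAlgHom k (MvPolynomial (ZMod n) k) _)
      (IsFractionRing.injective _ _)
  have hv := Polynomial.linearIndependent_coeff_X_pow_mul (Polynomial.cyclotomic_ne_zero n ℤ)
    (m := n - n.totient) (n := n) (by omega)
  have hw : ∀ j : Fin (n - n.totient), wMonomial n ε j =
      ∏ t, uForm n ε t ^ (Polynomial.X ^ (j : ℕ) * Polynomial.cyclotomic n ℤ).coeff t.val :=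
    fun j => by rw [wMonomial, Polynomial.prod_zpow_coeff_X_pow_mul _ _ (by omega), hdeg]
  simpa only [hw] using hu.prod_zpow_of_linearIndependent hv

/-- The `m = n - φ(n)` rational functions `w_0,…,w_{m-1}` are
algebraically independent over `k`. -/
theorem stmt_4 {k : Type*} [Field k] [CharZero k] (n : ℕ) (hn : 3 ≤ n) [NeZero n]
    (ε : k) (hε : IsPrimitiveRoot ε n) :
    AlgebraicIndependent k (fun j : Fin (n - n.totient) => wMonomial n ε (j : ℕ)) :=
  stmt_4_general n ε hε
end

section
/- The field of constants k(X)^d is the field of quotients of the ring of constants k[X]^d: every f ∈ k(X) with d(f) = 0 can be written as f = F/G where F, G ∈ k[X], G ≠ 0, and d(F) = d(G) = 0. -/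
/-!
Let `ψ j = ε ^ j` be the additive character of `ZMod n`. The Fourier variables
`Y i = ∑ j, ψ (i * j) • X j` generate `k[X]` (Fourier inversion, `n ≠ 0` in `k`) and satisfy
`d (Y i) = ψ (-i) • Y i`. Grading `k[X]` by giving `Y i` the weight `ψ (-i) ∈ k`, the
derivation acts on the weight-`m` part as multiplication by `m`.

Write a constant `f` as `A / B`. The weight components satisfy
`d (A_m - f B_m) = m • (A_m - f B_m)` and sum to `A - f B = 0`, so `A_m = f B_m` for every `m`,
since eigenvectors of `d` for distinct eigenvalues are independent. Pick `m` with `B_m ≠ 0` and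
multiply by a monomial in the `Y i` of weight `-m`; one exists because `∑ i, ψ (-i) = 0`.
Then `f = F / G` where `F` and `G` have weight `0`, so they are constants.
-/

open MvPolynomial

theorem Finsupp.exists_weight_eq_neg {σ M : Type*} [Fintype σ] [AddCommGroup M] {w : σ → M}
    (hw : ∑ i, w i = 0) (α : σ →₀ ℕ) : ∃ β : σ →₀ ℕ, weight w β = -weight w α := by
  refine ⟨equivFunOnFinite.symm fun i => α.degree - α i, ?_⟩
  simp_rw [weight_eq_sum, coe_equivFunOnFinite_symm, sub_nsmul _ (le_degree _ α)]
  rw [Finset.sum_add_distrib, Finset.sum_neg_distrib, ← Finset.smul_sum, hw, smul_zero,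
    zero_add]

theorem MvPolynomial.sum_weightedHomogeneousComponent_of_subset {σ R M : Type*}
    [CommSemiring R] [AddCommMonoid M] {w : σ → M} {p : MvPolynomial σ R} {s : Finset M}
    (hs : ∀ α ∈ p.support, Finsupp.weight w α ∈ s) :
    ∑ m ∈ s, weightedHomogeneousComponent w m p = p := by
  conv_rhs => rw [← sum_weightedHomogeneousComponent w p]
  refine (finsum_eq_sum_of_support_subset _ fun m hm => ?_).symm
  by_contra hms
  exact hm (weightedHomogeneousComponent_eq_zero' m p fun α hα hαm => hms (hαm ▸ hs α hα))

namespace Derivation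

section CommRing

variable {k K σ : Type*} [CommRing k] [CommRing K] [Algebra k K] (D : Derivation k K K)
  {v : σ → K} {w : σ → k}

theorem eigen_mul {a b : K} {l m : k} (ha : D a = l • a) (hb : D b = m • b) :
    D (a * b) = (l + m) • (a * b) := by
  simp only [leibniz, ha, hb, smul_eq_mul, Algebra.smul_def, map_add]
  ring

theorem eigen_pow {a : K} {l : k} (ha : D a = l • a) (e : ℕ) :
    D (a ^ e) = (e • l) • a ^ e := by
  induction e with
  | zero => simp
  | succ e ih => rw [pow_succ, D.eigen_mul ih ha, succ_nsmul]

theorem eigen_prod {ι : Type*} (s : Finset ι) {a : ι → K} {l : ι → k}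
    (ha : ∀ i ∈ s, D (a i) = l i • a i) :
    D (∏ i ∈ s, a i) = (∑ i ∈ s, l i) • ∏ i ∈ s, a i := by
  classical
  induction s using Finset.induction_on with
  | empty => simp
  | insert i s hi ih =>
    rw [Finset.prod_insert hi, Finset.sum_insert hi,
      D.eigen_mul (ha i (by simp)) (ih fun j hj => ha j (by simp [hj]))]

theorem eigen_aeval_monomial (hv : ∀ i, D (v i) = w i • v i) (α : σ →₀ ℕ) (c : k) :
    D (aeval v (monomial α c)) = Finsupp.weight w α • aeval v (monomial α c) := by
  have hc : D (algebraMap k K c) = (0 : k) • algebraMap k K c := by simp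
  rw [aeval_monomial, Finsupp.prod, D.eigen_mul hc
    (D.eigen_prod _ fun i _ => D.eigen_pow (hv i) (α i)), zero_add, Finsupp.weight_apply,
    Finsupp.sum]

theorem eigen_aeval_of_isWeightedHomogeneous (hv : ∀ i, D (v i) = w i • v i)
    {p : MvPolynomial σ k} {m : k} (hp : p.IsWeightedHomogeneous w m) :
    D (aeval v p) = m • aeval v p := by
  induction hp using IsWeightedHomogeneous.induction_on with
  | zero => simp
  | add p q _ _ hp hq => rw [map_add, map_add, hp, hq, smul_add]
  | monomial α c hα => rw [D.eigen_aeval_monomial hv, hα]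

end CommRing

section Field

variable {k K σ : Type*} [Field k] [Field K] [Algebra k K] (D : Derivation k K K)
  {v : σ → K} {w : σ → k}

theorem eq_zero_of_sum_eigen_eq_zero {s : Finset k} {a : k → K}
    (ha : ∀ l ∈ s, D (a l) = l • a l) (hs : ∑ l ∈ s, a l = 0) : ∀ l ∈ s, a l = 0 :=
  (iSupIndep_iff_finsetSum_eq_zero_imp_eq_zero _).mp
    (Module.End.eigenspaces_iSupIndep (D : Module.End k K)) s a
    (fun l hl => Module.End.mem_eigenspace_iff.mpr (ha l hl)) hs

theorem exists_isWeightedHomogeneous_eq_mul (hv : ∀ i, D (v i) = w i • v i) {f : K}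
    (hf : D f = 0) {p q : MvPolynomial σ k} (hq : aeval v q ≠ 0)
    (hpq : aeval v p = f * aeval v q) :
    ∃ (m : k) (P Q : MvPolynomial σ k), P.IsWeightedHomogeneous w m ∧
      Q.IsWeightedHomogeneous w m ∧ aeval v Q ≠ 0 ∧ aeval v P = f * aeval v Q := by
  classical
  set s := (p.support ∪ q.support).image (Finsupp.weight w)
  have hp : ∑ m ∈ s, weightedHomogeneousComponent w m p = p :=
    sum_weightedHomogeneousComponent_of_subset fun α hα =>
      Finset.mem_image_of_mem _ (Finset.mem_union_left _ hα)
  have hq' : ∑ m ∈ s, weightedHomogeneousComponent w m q = q :=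
    sum_weightedHomogeneousComponent_of_subset fun α hα =>
      Finset.mem_image_of_mem _ (Finset.mem_union_right _ hα)
  set a := fun m => aeval v (weightedHomogeneousComponent w m p)
  set b := fun m => aeval v (weightedHomogeneousComponent w m q)
  have ha (m : k) : D (a m) = m • a m :=
    D.eigen_aeval_of_isWeightedHomogeneous hv
      (weightedHomogeneousComponent_isWeightedHomogeneous m p)
  have hb (m : k) : D (b m) = m • b m :=
    D.eigen_aeval_of_isWeightedHomogeneous hv
      (weightedHomogeneousComponent_isWeightedHomogeneous m q)
  have hf0 : D f = (0 : k) • f := by rw [hf, zero_smul]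
  have hab : ∀ m ∈ s, a m - f * b m = 0 := by
    refine D.eq_zero_of_sum_eigen_eq_zero (fun m _ => ?_) ?_
    · rw [map_sub, ha, D.eigen_mul hf0 (hb m), zero_add, smul_sub]
    · rw [Finset.sum_sub_distrib, ← Finset.mul_sum]
      simp only [a, b, ← map_sum, hp, hq', hpq, sub_self]
  obtain ⟨m, hm, hbm⟩ : ∃ m ∈ s, b m ≠ 0 := by
    refine Finset.exists_ne_zero_of_sum_ne_zero ?_
    simpa only [b, ← map_sum, hq'] using hq
  exact ⟨m, _, _, weightedHomogeneousComponent_isWeightedHomogeneous m p,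
    weightedHomogeneousComponent_isWeightedHomogeneous m q, hbm, sub_eq_zero.mp (hab m hm)⟩

theorem exists_isWeightedHomogeneous_zero_eq_mul [Fintype σ] (hv : ∀ i, D (v i) = w i • v i)
    (hv0 : ∀ i, v i ≠ 0) (hw : ∑ i, w i = 0) {f : K} (hf : D f = 0) {p q : MvPolynomial σ k}
    (hq : aeval v q ≠ 0) (hpq : aeval v p = f * aeval v q) :
    ∃ P Q : MvPolynomial σ k, P.IsWeightedHomogeneous w 0 ∧ Q.IsWeightedHomogeneous w 0 ∧
      aeval v Q ≠ 0 ∧ aeval v P = f * aeval v Q := by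
  obtain ⟨m, P, Q, hP, hQ, hQ0, hPQ⟩ := D.exists_isWeightedHomogeneous_eq_mul hv hf hq hpq
  obtain ⟨α, hα⟩ := ne_zero_iff.mp fun h : Q = 0 => hQ0 (by rw [h, map_zero])
  obtain ⟨β, hβ⟩ := Finsupp.exists_weight_eq_neg hw α
  have hM : (monomial β (1 : k)).IsWeightedHomogeneous w (-m) :=
    isWeightedHomogeneous_monomial w β 1 (by rw [hβ, hQ hα])
  have hM0 : aeval v (monomial β (1 : k)) ≠ 0 := by
    rw [aeval_monomial, map_one, one_mul]
    exact Finset.prod_ne_zero_iff.mpr fun i _ => pow_ne_zero _ (hv0 i)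
  refine ⟨P * monomial β 1, Q * monomial β 1, add_neg_cancel m ▸ hP.mul hM,
    add_neg_cancel m ▸ hQ.mul hM, ?_, ?_⟩
  · rw [map_mul]
    exact mul_ne_zero hQ0 hM0
  · rw [map_mul, map_mul, hPQ, mul_assoc]

end Field

end Derivation

section Fourier

variable {k R : Type*} [Field k] [CommRing R] [Fintype R] (ψ : AddChar R k)

noncomputable def fourierX (i : R) : MvPolynomial R k := ∑ j, ψ (i * j) • X j

theorem fourierX_ne_zero (i : R) : fourierX ψ i ≠ 0 := by
  classical
  intro h
  have := congrArg (coeff (Finsupp.single 0 1)) h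
  simp [fourierX, coeff_sum, coeff_X, Finsupp.single_left_inj] at this

variable {ψ}

theorem sum_fourierX [DecidableEq R] (hψ : ψ.IsPrimitive) (j : R) :
    ∑ i, ψ (-(i * j)) • fourierX ψ i = (Fintype.card R : k) • X j := by
  calc ∑ i, ψ (-(i * j)) • fourierX ψ i
      = ∑ l, (∑ i, ψ (i * (l - j))) • X l := by
        simp only [fourierX, Finset.smul_sum, smul_smul, ← AddChar.map_add_eq_mul,
          Finset.sum_smul]
        rw [Finset.sum_comm]
        congr! 3
        exact congrArg ψ (by ring)
    _ = (Fintype.card R : k) • X j := by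
        simp [AddChar.sum_mulShift _ hψ, sub_eq_zero]

theorem aeval_fourierX_surjective [DecidableEq R] (hψ : ψ.IsPrimitive)
    (hR : (Fintype.card R : k) ≠ 0) : Function.Surjective (aeval (R := k) (fourierX ψ)) := by
  rw [← AlgHom.range_eq_top, eq_top_iff, ← adjoin_range_X (R := k) (σ := R),
    Algebra.adjoin_le_iff]
  rintro _ ⟨j, rfl⟩
  refine ⟨(Fintype.card R : k)⁻¹ • ∑ i, ψ (-(i * j)) • X i, ?_⟩
  simp only [AlgHom.toRingHom_eq_coe, RingHom.coe_coe, map_smul, map_sum, aeval_X,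
    sum_fourierX hψ, smul_smul, inv_mul_cancel₀ hR, one_smul]

variable {K : Type*} [Field K] [Algebra k K] {D : Derivation k K K}
  {θ : MvPolynomial R k →ₐ[k] K}

theorem derivation_fourierX (hD : ∀ j, D (θ (X j)) = θ (X (j + 1))) (i : R) :
    D (θ (fourierX ψ i)) = ψ (-i) • θ (fourierX ψ i) := by
  simp only [fourierX, map_sum, map_smul, D.map_smul, hD, Finset.smul_sum, smul_smul]
  refine Fintype.sum_equiv (Equiv.addRight 1) _ _ fun j => ?_
  rw [Equiv.coe_addRight, ← AddChar.map_add_eq_mul]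
  congr 2
  ring

theorem exists_eq_div_of_derivation_eq_zero [DecidableEq R] [Nontrivial R]
    (hψ : ψ.IsPrimitive) (hR : (Fintype.card R : k) ≠ 0) (hθ : Function.Injective θ)
    (hD : ∀ j, D (θ (X j)) = θ (X (j + 1))) {f : K} (hf : D f = 0) {a b : MvPolynomial R k}
    (hb : b ≠ 0) (hab : f = θ a / θ b) :
    ∃ F G : MvPolynomial R k, G ≠ 0 ∧ D (θ F) = 0 ∧ D (θ G) = 0 ∧ f = θ F / θ G := by
  have hw : ∑ i, ψ (-i) = 0 :=
    (Fintype.sum_equiv (Equiv.neg _) _ _ fun _ => rfl).trans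
      (AddChar.sum_eq_zero_of_ne_one (by simpa using hψ one_ne_zero))
  have hθY (p : MvPolynomial R k) :
      θ (aeval (fourierX ψ) p) = aeval (fun i => θ (fourierX ψ i)) p :=
    comp_aeval_apply _ θ p
  have hv0 (i : R) : θ (fourierX ψ i) ≠ 0 :=
    (map_ne_zero_iff θ hθ).mpr (fourierX_ne_zero ψ i)
  have hb' : θ b ≠ 0 := (map_ne_zero_iff θ hθ).mpr hb
  obtain ⟨p, rfl⟩ := aeval_fourierX_surjective hψ hR a
  obtain ⟨q, rfl⟩ := aeval_fourierX_surjective hψ hR b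
  obtain ⟨P, Q, hP, hQ, hQ0, hPQ⟩ :=
    D.exists_isWeightedHomogeneous_zero_eq_mul (derivation_fourierX hD) hv0 hw hf
      (hθY q ▸ hb') (by rw [← hθY p, ← hθY q, hab, div_mul_cancel₀ _ hb'])
  refine ⟨aeval (fourierX ψ) P, aeval (fourierX ψ) Q,
    fun h => hQ0 (by rw [← hθY, h, map_zero]), ?_, ?_, ?_⟩
  · rw [hθY, D.eigen_aeval_of_isWeightedHomogeneous (derivation_fourierX hD) hP, zero_smul]
  · rw [hθY, D.eigen_aeval_of_isWeightedHomogeneous (derivation_fourierX hD) hQ, zero_smul]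
  · rw [hθY, hθY, hPQ, mul_div_cancel_right₀ _ hQ0]

end Fourier

/-- The field of constants `k(X)^d` is the field of quotients of the ring
of constants `k[X]^d`: every rational function `f` with `d(f) = 0` can be written as
`f = F/G`, where `F, G` are polynomials, `G ≠ 0`, and `d(F) = d(G) = 0`. -/
theorem stmt_6 {k : Type*} [Field k] [CharZero k] (n : ℕ) (hn : 3 ≤ n)
    (ε : k) (hε : IsPrimitiveRoot ε n)
    (d : Derivation k (FractionRing (MvPolynomial (ZMod n) k))
      (FractionRing (MvPolynomial (ZMod n) k)))
    (hd : ∀ j : ZMod n,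
      d (algebraMap (MvPolynomial (ZMod n) k) (FractionRing (MvPolynomial (ZMod n) k)) (X j))
        = algebraMap (MvPolynomial (ZMod n) k) (FractionRing (MvPolynomial (ZMod n) k))
            (X (j + 1)))
    (f : FractionRing (MvPolynomial (ZMod n) k)) (hf : d f = 0) :
    ∃ F G : MvPolynomial (ZMod n) k, G ≠ 0 ∧
      d (algebraMap (MvPolynomial (ZMod n) k) (FractionRing (MvPolynomial (ZMod n) k)) F) = 0 ∧
      d (algebraMap (MvPolynomial (ZMod n) k) (FractionRing (MvPolynomial (ZMod n) k)) G) = 0 ∧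
      f = algebraMap (MvPolynomial (ZMod n) k) (FractionRing (MvPolynomial (ZMod n) k)) F /
            algebraMap (MvPolynomial (ZMod n) k) (FractionRing (MvPolynomial (ZMod n) k)) G := by
  have : Fact (1 < n) := ⟨by omega⟩
  obtain ⟨A, B, hB, hAB⟩ := IsFractionRing.div_surjective (A := MvPolynomial (ZMod n) k) f
  exact exists_eq_div_of_derivation_eq_zero (θ := IsScalarTower.toAlgHom k _ _)
    (AddChar.zmodChar_primitive_of_primitive_root n hε) (by simp [NeZero.ne n])
    (IsFractionRing.injective _ _) hd hf (nonZeroDivisors.ne_zero hB) hAB.symm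
end

section
/- Let d_1, d_2 : k(X) → k(X) be two derivations. Assume that k(X)^{d_1} = k(c, b_1, …, b_s), where c, b_1, …, b_s ∈ k(X) are algebraically independent over k, d_2(b_1) = ⋯ = d_2(b_s) = 0, and d_2(c) ≠ 0. Then k(X)^{d_1} ∩ k(X)^{d_2} = k(b_1, …, b_s). -/
/-! Since `d₂` vanishes on `K = k(b)`, it is a `K`-derivation, and `d₂ c ≠ 0` forces `c` to be
transcendental over `K`: in characteristic zero such a derivation kills every element algebraic
over `K`, by differentiating the (separable) minimal polynomial. For `f = P(c) / Q(c) ∈ K(c)`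
one has `Q(c)² d₂ f = W(P, Q)(c) d₂ c` with `W` the Wronskian, so `d₂ f = 0` gives
`W(P, Q) = 0`; after removing `gcd(P, Q)` the Wronskian of coprime polynomials vanishes only if
both are constant, so `P` and `Q` are proportional and `f ∈ K`. -/

open Polynomial

namespace Derivation

variable {k F : Type*} [Field k] [Field F] [Algebra k F]

def toIntermediateField (D : Derivation k F F) (K : IntermediateField k F)
    (hK : ∀ x ∈ K, D x = 0) : Derivation K F F :=
  Derivation.mk'
    { toFun := D
      map_add' := D.map_add
      map_smul' := fun a x => by
        rw [Algebra.smul_def, D.leibniz, IntermediateField.algebraMap_apply, hK _ a.2, smul_zero,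
          add_zero, RingHom.id_apply]
        rfl }
    D.leibniz

theorem map_eq_zero_of_mem_adjoin (D : Derivation k F F) {S : Set F} (hS : ∀ x ∈ S, D x = 0)
    {x : F} (hx : x ∈ IntermediateField.adjoin k S) : D x = 0 := by
  induction hx using IntermediateField.adjoin_induction with
  | mem y hy => exact hS y hy
  | algebraMap r => exact D.map_algebraMap r
  | add y z _ _ hy hz => rw [map_add, hy, hz, add_zero]
  | inv y _ hy => rw [leibniz_inv, hy, smul_zero]
  | mul y z _ _ hy hz => rw [leibniz, hy, hz, smul_zero, smul_zero, add_zero]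

end Derivation

section

variable {K F : Type*} [Field K] [CharZero K] [Field F] [Algebra K F]

theorem Derivation.transcendental_of_ne_zero (D : Derivation K F F) {c : F} (hc : D c ≠ 0) :
    Transcendental K c := by
  intro halg
  have hsep : (minpoly K c).Separable := (minpoly.irreducible halg.isIntegral).separable
  have h := congrArg D (minpoly.aeval K c)
  rw [D.map_aeval, map_zero, smul_eq_mul] at h
  exact mul_ne_zero (hsep.aeval_derivative_ne_zero (minpoly.aeval K c)) hc h

theorem Polynomial.exists_eq_C_mul_of_wronskian_eq_zero {P Q : K[X]} (hQ : Q ≠ 0)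
    (h : wronskian P Q = 0) : ∃ a, P = C a * Q := by
  classical
  obtain ⟨P₁, Q₁, hP, hQd, hunit⟩ := extract_gcd P Q
  have hd : gcd P Q ≠ 0 := gcd_ne_zero_of_right hQ
  generalize gcd P Q = d at hP hQd hd
  have hcop : IsCoprime P₁ Q₁ := (gcd_isUnit_iff_isRelPrime.mp hunit).isCoprime
  have hW : d ^ 2 * wronskian P₁ Q₁ = 0 := by
    rw [← h, hP, hQd]
    simp only [wronskian, derivative_mul]
    ring
  obtain ⟨hP₁, hQ₁⟩ := hcop.wronskian_eq_zero_iff.mp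
    ((mul_eq_zero.mp hW).resolve_left (pow_ne_zero 2 hd))
  rw [eq_C_of_derivative_eq_zero hP₁] at hP
  rw [eq_C_of_derivative_eq_zero hQ₁] at hQd
  have hq : Q₁.coeff 0 ≠ 0 := by
    rintro hq
    rw [hq, map_zero, mul_zero] at hQd
    exact hQ hQd
  refine ⟨P₁.coeff 0 / Q₁.coeff 0, ?_⟩
  rw [hP, hQd, mul_left_comm, ← C_mul, div_mul_cancel₀ _ hq]

theorem Derivation.mem_range_of_mem_adjoin_simple (D : Derivation K F F) {c f : F}
    (hc : D c ≠ 0) (hf : f ∈ IntermediateField.adjoin K {c}) (hDf : D f = 0) :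
    f ∈ Set.range (algebraMap K F) := by
  obtain ⟨P, Q, rfl⟩ := (IntermediateField.mem_adjoin_simple_iff K f).mp hf
  by_cases hQc : aeval c Q = 0
  · exact ⟨0, by rw [hQc, div_zero, map_zero]⟩
  have hQ : Q ≠ 0 := by rintro rfl; exact hQc (map_zero _)
  have hW : aeval c (wronskian P Q) = 0 := by
    rw [Derivation.leibniz_div, D.map_aeval, D.map_aeval, smul_eq_mul] at hDf
    have hnum := (mul_eq_zero.mp hDf).resolve_left (pow_ne_zero 2 (inv_ne_zero hQc))
    rw [wronskian, map_sub, map_mul, map_mul]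
    apply mul_right_cancel₀ hc
    simp only [smul_eq_mul] at hnum
    linear_combination -hnum
  obtain ⟨a, rfl⟩ := exists_eq_C_mul_of_wronskian_eq_zero hQ
    (transcendental_iff_injective.mp (D.transcendental_of_ne_zero hc) (hW.trans (map_zero _).symm))
  exact ⟨a, by rw [map_mul, aeval_C, mul_div_assoc, div_self hQc, mul_one]⟩

end

theorem stmt_8_general {k : Type*} [Field k] [CharZero k] (n : ℕ)
    (d₁ d₂ : Derivation k (FractionRing (MvPolynomial (Fin n) k))
      (FractionRing (MvPolynomial (Fin n) k)))
    (s : ℕ) (c : FractionRing (MvPolynomial (Fin n) k))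
    (b : Fin s → FractionRing (MvPolynomial (Fin n) k))
    (h1 : {f : FractionRing (MvPolynomial (Fin n) k) | d₁ f = 0}
      = ↑(IntermediateField.adjoin k (insert c (Set.range b))))
    (hb : ∀ i, d₂ (b i) = 0) (hc : d₂ c ≠ 0) :
    {f : FractionRing (MvPolynomial (Fin n) k) | d₁ f = 0}
        ∩ {f : FractionRing (MvPolynomial (Fin n) k) | d₂ f = 0}
      = ↑(IntermediateField.adjoin k (Set.range b)) := by
  set K := IntermediateField.adjoin k (Set.range b)
  have hK : ∀ x ∈ K, d₂ x = 0 := fun x =>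
    d₂.map_eq_zero_of_mem_adjoin (by rintro _ ⟨i, rfl⟩; exact hb i)
  have hKc : IntermediateField.adjoin k (insert c (Set.range b))
      = (IntermediateField.adjoin K {c}).restrictScalars k := by
    rw [IntermediateField.adjoin_adjoin_left, Set.union_singleton]
  ext f
  rw [h1, hKc]
  simp only [Set.mem_inter_iff, Set.mem_ofPred_eq, SetLike.mem_coe,
    IntermediateField.mem_restrictScalars]
  constructor
  · rintro ⟨hfc, hf⟩
    obtain ⟨a, rfl⟩ := (d₂.toIntermediateField K hK).mem_range_of_mem_adjoin_simple hc hfc hf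
    exact a.2
  · intro hf
    exact ⟨(IntermediateField.adjoin K {c}).algebraMap_mem ⟨f, hf⟩, hK f hf⟩

/-- Let `d₁, d₂` be derivations of `k(X) = k(x_0,…,x_{n-1})`. If
`k(X)^{d₁} = k(c, b_1, …, b_s)` for elements `c, b_1, …, b_s` algebraically independent
over `k` with `d₂(b_i) = 0` for all `i` and `d₂(c) ≠ 0`, then
`k(X)^{d₁} ∩ k(X)^{d₂} = k(b_1, …, b_s)`. -/
theorem stmt_8 {k : Type*} [Field k] [CharZero k] (n : ℕ) (hn : 3 ≤ n)
    (d₁ d₂ : Derivation k (FractionRing (MvPolynomial (Fin n) k))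
      (FractionRing (MvPolynomial (Fin n) k)))
    (s : ℕ) (c : FractionRing (MvPolynomial (Fin n) k))
    (b : Fin s → FractionRing (MvPolynomial (Fin n) k))
    (hind : AlgebraicIndependent k (Fin.cons c b : Fin (s + 1) → _))
    (h1 : {f : FractionRing (MvPolynomial (Fin n) k) | d₁ f = 0}
      = ↑(IntermediateField.adjoin k (insert c (Set.range b))))
    (hb : ∀ i, d₂ (b i) = 0) (hc : d₂ c ≠ 0) :
    {f : FractionRing (MvPolynomial (Fin n) k) | d₁ f = 0}
        ∩ {f : FractionRing (MvPolynomial (Fin n) k) | d₂ f = 0}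
      = ↑(IntermediateField.adjoin k (Set.range b)) :=
  stmt_8_general n d₁ d₂ s c b h1 hb hc
end

section
/- One has k(X)^d ∩ k(X)^E = k if and only if n is a prime number. That is, the only rational functions that are simultaneously constants of the cyclotomic derivation d and homogeneous of degree zero are the elements of k, exactly when n is prime. -/
/-!
Put `ψ t = ε ^ t` on `ZMod n` and `u_i = ∑ j, ψ (-(i * j)) • x_j`. The Fourier matrix is
invertible, so the `u_i` are again free generators of `k(X)`, and in them both derivations are
diagonal: `d u_i = ψ i • u_i` and `E u_i = u_i`. Hence the monomial `u^a` is a joint eigenvector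
with joint weight `(∑ a_i ψ i, ∑ a_i)`.

If `f` is a common constant, the `k`-space of denominators of `f` is stable under both diagonal
derivations, and a nonzero denominator with fewest monomials is a joint eigenvector. When distinct
exponents have distinct joint weights it is therefore a monomial `u^a`, the numerator is a
multiple of `u^a`, and `f ∈ k`. Conversely, two exponents `a ≠ b` of equal joint weight
give the nonconstant common constant `u^a / u^b`.

For `n` prime, `1, ε, …, ε^(n-2)` are linearly independent over `ℚ`, so a rational relation
`∑ c_i ε^i = 0` has constant coefficients, and `∑ c_i = 0` then forces `c = 0`. For `n` composite
with a divisor `1 < m < n`, `ψ` sums to zero both over `ZMod n` and over its subgroup generated by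
`m`, of order `n / m`; `m` times the indicator of that subgroup and the all-ones exponent then
have equal joint weights.
-/

open MvPolynomial
open Finsupp (weight)
open scoped Finset

theorem Derivation.map_div_eq_zero_of_eq_smul {k K : Type*} [CommRing k] [Field K] [Algebra k K]
    (D : Derivation k K K) {x y : K} {c : k} (hx : D x = c • x) (hy : D y = c • y) :
    D (x / y) = 0 := by
  rw [Derivation.leibniz_div, hx, hy, smul_comm y c x, smul_comm x c y, smul_eq_mul y x,
    smul_eq_mul x y, mul_comm y x, sub_self, smul_zero]

theorem IsFractionRing.exists_map_eq_mul_of_surjective {A B K : Type*} [CommRing A]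
    [Nontrivial A] [CommRing B] [Field K] [Algebra A K] [IsFractionRing A K] {g : B → A}
    (hg : Function.Surjective g) (f : K) :
    ∃ p q, algebraMap A K (g q) ≠ 0 ∧ algebraMap A K (g p) = f * algebraMap A K (g q) := by
  obtain ⟨a, b, hb, rfl⟩ := IsFractionRing.div_surjective (A := A) f
  obtain ⟨p, rfl⟩ := hg a
  obtain ⟨q, rfl⟩ := hg b
  have hq : algebraMap A K (g q) ≠ 0 := IsFractionRing.to_map_ne_zero_of_mem_nonZeroDivisors hb
  exact ⟨p, q, hq, (div_mul_cancel₀ _ hq).symm⟩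

namespace MvPolynomial

section Diagonal

variable {σ R : Type*} [CommRing R]

noncomputable def diagDerivation (μ : σ → R) :
    Derivation R (MvPolynomial σ R) (MvPolynomial σ R) :=
  mkDerivation R fun i => μ i • X i

theorem diagDerivation_X (μ : σ → R) (i : σ) : diagDerivation μ (X i) = μ i • X i :=
  mkDerivation_X R _ i

theorem diagDerivation_monomial (μ : σ → R) (s : σ →₀ ℕ) (r : R) :
    diagDerivation μ (monomial s r) = weight μ s • monomial s r := by
  suffices h : ∀ s, diagDerivation μ (monomial s 1) = weight μ s • monomial s (1 : R) by
    rw [← mul_one r, ← smul_eq_mul, ← smul_monomial, Derivation.map_smul, h, smul_comm]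
  have hadd : ∀ f g, diagDerivation μ (monomial f 1) = weight μ f • monomial f (1 : R) →
      diagDerivation μ (monomial g 1) = weight μ g • monomial g (1 : R) →
      diagDerivation μ (monomial (f + g) 1) = weight μ (f + g) • monomial (f + g) (1 : R) := by
    intro f g hf hg
    rw [← one_mul (1 : R), ← monomial_mul, Derivation.leibniz, hf, hg, map_add, add_smul,
      smul_eq_mul, smul_eq_mul, mul_smul_comm, mul_smul_comm, add_comm, mul_comm]
  have hsingle : ∀ i m, diagDerivation μ (monomial (Finsupp.single i m) 1) =
      weight μ (Finsupp.single i m) • monomial (Finsupp.single i m) (1 : R) := by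
    intro i m
    induction m with
    | zero => simp
    | succ m ihm =>
      rw [Finsupp.single_add]
      refine hadd _ _ ihm ?_
      rw [← X, diagDerivation_X, Finsupp.weight_single, one_smul]
  intro s
  induction s using Finsupp.induction with
  | zero => simp
  | single_add i m s _ _ ih => exact hadd _ _ (hsingle i m) ih

theorem coeff_diagDerivation (μ : σ → R) (p : MvPolynomial σ R) (b : σ →₀ ℕ) :
    coeff b (diagDerivation μ p) = weight μ b * coeff b p := by
  induction p using MvPolynomial.induction_on' with
  | monomial s r =>
    classical
    rw [diagDerivation_monomial, coeff_smul, coeff_monomial, smul_eq_mul]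
    split_ifs with h <;> simp [h]
  | add p q hp hq => rw [map_add, coeff_add, coeff_add, hp, hq, mul_add]

theorem diagDerivation_eq_smul_iff [IsDomain R] {μ : σ → R} {p : MvPolynomial σ R} {c : R} :
    diagDerivation μ p = c • p ↔ ∀ b ∈ p.support, weight μ b = c := by
  simp only [MvPolynomial.ext_iff, coeff_diagDerivation, coeff_smul, smul_eq_mul,
    mem_support_iff]
  refine forall_congr' fun b => ⟨fun h hb => mul_right_cancel₀ hb h, fun h => ?_⟩
  by_cases hb : coeff b p = 0
  · simp [hb]
  · rw [h hb]

theorem diagDerivation_eq_smul_of_minimal [IsDomain R] {μ : σ → R}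
    {V : Submodule R (MvPolynomial σ R)} (hV : ∀ p ∈ V, diagDerivation μ p ∈ V)
    {q : MvPolynomial σ R} (hq : q ∈ V)
    (hmin : ∀ p ∈ V, p ≠ 0 → #q.support ≤ #p.support) {a : σ →₀ ℕ} (ha : a ∈ q.support) :
    diagDerivation μ q = weight μ a • q := by
  classical
  set r := diagDerivation μ q - weight μ a • q
  have hcoeff : ∀ b, coeff b r = (weight μ b - weight μ a) * coeff b q := fun b => by
    rw [coeff_sub, coeff_diagDerivation, coeff_smul, smul_eq_mul, sub_mul]
  have hsupp : r.support ⊆ q.support.erase a := by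
    intro b hb
    rw [mem_support_iff, hcoeff] at hb
    refine Finset.mem_erase.mpr ⟨?_, mem_support_iff.mpr (right_ne_zero_of_mul hb)⟩
    rintro rfl
    simp at hb
  -- `r ∈ V` has lost the monomial `a`, so minimality of `q` forces `r = 0`.
  by_contra hne
  refine (hmin r (V.sub_mem (hV q hq) (V.smul_mem _ hq)) (sub_ne_zero.mpr hne)).not_gt ?_
  exact (Finset.card_le_card hsupp).trans_lt (Finset.card_erase_lt_of_mem ha)

theorem eq_monomial_of_diagDerivation_eq_smul [IsDomain R] {μ ν : σ → R}
    (hinj : ∀ a b : σ →₀ ℕ, weight μ a = weight μ b → weight ν a = weight ν b → a = b)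
    {p : MvPolynomial σ R} {a : σ →₀ ℕ} (hμ : diagDerivation μ p = weight μ a • p)
    (hν : diagDerivation ν p = weight ν a • p) : p = monomial a (coeff a p) := by
  classical
  ext b
  rw [coeff_monomial]
  split_ifs with hab
  · rw [hab]
  · by_contra hb
    have hb' := mem_support_iff.mpr hb
    exact hab (hinj _ _ (diagDerivation_eq_smul_iff.mp hμ b hb')
      (diagDerivation_eq_smul_iff.mp hν b hb')).symm

end Diagonal

section LinearSubst

variable {σ R : Type*} [CommRing R] [Fintype σ]

noncomputable def linearSubst (A : Matrix σ σ R) : MvPolynomial σ R →ₐ[R] MvPolynomial σ R :=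
  aeval fun i => ∑ j, A i j • X j

theorem linearSubst_X (A : Matrix σ σ R) (i : σ) : linearSubst A (X i) = ∑ j, A i j • X j :=
  aeval_X _ _

theorem linearSubst_comp (A B : Matrix σ σ R) :
    (linearSubst B).comp (linearSubst A) = linearSubst (A * B) := by
  refine algHom_ext fun i => ?_
  simp only [AlgHom.comp_apply, linearSubst_X, map_sum, map_smul, Finset.smul_sum, smul_smul,
    Matrix.mul_apply, Finset.sum_smul]
  exact Finset.sum_comm

variable [DecidableEq σ]

theorem linearSubst_one : linearSubst (1 : Matrix σ σ R) = AlgHom.id R _ :=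
  algHom_ext fun i => by simp [linearSubst_X, Matrix.one_apply]

theorem linearSubst_bijective {A B : Matrix σ σ R} (h : A * B = 1) :
    Function.Bijective (linearSubst A) := by
  have hinv : ∀ {A B : Matrix σ σ R}, A * B = 1 → ∀ p, linearSubst B (linearSubst A p) = p :=
    fun h p => by rw [← AlgHom.comp_apply, linearSubst_comp, h, linearSubst_one, AlgHom.id_apply]
  exact ⟨Function.LeftInverse.injective (hinv h),
    Function.RightInverse.surjective (hinv (mul_eq_one_comm.mp h))⟩

end LinearSubst

section Constants

variable {σ k K : Type*} [Field k] [Field K] [Algebra k K] (φ : MvPolynomial σ k →ₐ[k] K)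

noncomputable def denominators (f : K) : Submodule k (MvPolynomial σ k) :=
  (LinearMap.range φ.toLinearMap).comap (LinearMap.mulLeft k f ∘ₗ φ.toLinearMap)

theorem mem_denominators {f : K} {q : MvPolynomial σ k} :
    q ∈ denominators φ f ↔ ∃ p, φ p = f * φ q :=
  Iff.rfl

variable {φ} {D : Derivation k K K} {μ : σ → k}

theorem map_diagDerivation (hD : ∀ i, D (φ (X i)) = μ i • φ (X i)) (p : MvPolynomial σ k) :
    D (φ p) = φ (diagDerivation μ p) := by
  induction p using MvPolynomial.induction_on with
  | C a =>
    rw [← algebraMap_eq, AlgHom.commutes, Derivation.map_algebraMap, Derivation.map_algebraMap,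
      map_zero]
  | add p q hp hq => rw [map_add, map_add, hp, hq, map_add, map_add]
  | mul_X p i hp =>
    rw [map_mul, Derivation.leibniz, hp, hD, Derivation.leibniz, diagDerivation_X, map_add,
      smul_eq_mul, smul_eq_mul, smul_eq_mul, smul_eq_mul, map_mul, map_mul, map_smul, add_comm]

theorem diagDerivation_mem_denominators (hD : ∀ i, D (φ (X i)) = μ i • φ (X i)) {f : K}
    (hf : D f = 0) {q : MvPolynomial σ k} (hq : q ∈ denominators φ f) :
    diagDerivation μ q ∈ denominators φ f := by
  obtain ⟨p, hp⟩ := (mem_denominators φ).mp hq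
  refine (mem_denominators φ).mpr ⟨diagDerivation μ p, ?_⟩
  rw [← map_diagDerivation hD, ← map_diagDerivation hD, hp, Derivation.leibniz, hf, smul_zero,
    add_zero, smul_eq_mul]

theorem diagDerivation_eq_smul_of_map_eq_mul (hφ : Function.Injective φ)
    (hD : ∀ i, D (φ (X i)) = μ i • φ (X i)) {f : K} (hf : D f = 0) {p q : MvPolynomial σ k}
    (hpq : φ p = f * φ q) {c : k} (hq : diagDerivation μ q = c • q) :
    diagDerivation μ p = c • p := by
  apply hφ
  rw [← map_diagDerivation hD, hpq, Derivation.leibniz, hf, smul_zero, add_zero, smul_eq_mul,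
    map_diagDerivation hD, hq, map_smul, map_smul, hpq, mul_smul_comm]

variable {D₁ D₂ : Derivation k K K} {ν : σ → k}

theorem mem_range_algebraMap_of_weight_injective (hφ : Function.Injective φ)
    (hD₁ : ∀ i, D₁ (φ (X i)) = μ i • φ (X i)) (hD₂ : ∀ i, D₂ (φ (X i)) = ν i • φ (X i))
    (hinj : ∀ a b : σ →₀ ℕ, weight μ a = weight μ b → weight ν a = weight ν b → a = b) {f : K}
    (hfrac : ∃ p q, φ q ≠ 0 ∧ φ p = f * φ q) (h₁ : D₁ f = 0) (h₂ : D₂ f = 0) :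
    f ∈ Set.range (algebraMap k K) := by
  obtain ⟨p₀, q₀, hq₀, hpq₀⟩ := hfrac
  obtain ⟨q, ⟨hqV, hq0⟩, hmin⟩ := (measure fun q : MvPolynomial σ k => #q.support).wf.has_min
    {q | q ∈ denominators φ f ∧ q ≠ 0}
    ⟨q₀, (mem_denominators φ).mpr ⟨p₀, hpq₀⟩, fun h => hq₀ (h ▸ map_zero φ)⟩
  replace hmin : ∀ r ∈ denominators φ f, r ≠ 0 → #q.support ≤ #r.support :=
    fun r hr hr0 => not_lt.mp (hmin r ⟨hr, hr0⟩)
  obtain ⟨a, ha⟩ := support_nonempty.mpr hq0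
  obtain ⟨p, hpq⟩ := (mem_denominators φ).mp hqV
  have hq₁ := diagDerivation_eq_smul_of_minimal
    (fun _ => diagDerivation_mem_denominators hD₁ h₁) hqV hmin ha
  have hq₂ := diagDerivation_eq_smul_of_minimal
    (fun _ => diagDerivation_mem_denominators hD₂ h₂) hqV hmin ha
  have hp₁ := diagDerivation_eq_smul_of_map_eq_mul hφ hD₁ h₁ hpq hq₁
  have hp₂ := diagDerivation_eq_smul_of_map_eq_mul hφ hD₂ h₂ hpq hq₂
  obtain ⟨pa, rfl⟩ : ∃ pa, p = monomial a pa :=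
    ⟨_, eq_monomial_of_diagDerivation_eq_smul hinj hp₁ hp₂⟩
  obtain ⟨qa, rfl⟩ : ∃ qa, q = monomial a qa :=
    ⟨_, eq_monomial_of_diagDerivation_eq_smul hinj hq₁ hq₂⟩
  refine ⟨pa / qa, mul_right_cancel₀ ((hφ.ne_iff' (map_zero φ)).mpr hq0) ?_⟩
  rw [← hpq, ← Algebra.smul_def, ← map_smul, smul_monomial, smul_eq_mul,
    div_mul_cancel₀ _ (monomial_eq_zero.not.mp hq0)]

theorem exists_notMem_range_algebraMap_of_weight_eq (hφ : Function.Injective φ)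
    (hD₁ : ∀ i, D₁ (φ (X i)) = μ i • φ (X i)) (hD₂ : ∀ i, D₂ (φ (X i)) = ν i • φ (X i))
    {a b : σ →₀ ℕ} (hab : a ≠ b) (hμ : weight μ a = weight μ b) (hν : weight ν a = weight ν b) :
    ∃ f, D₁ f = 0 ∧ D₂ f = 0 ∧ f ∉ Set.range (algebraMap k K) := by
  have hmono : ∀ {D : Derivation k K K} {w : σ → k}, (∀ i, D (φ (X i)) = w i • φ (X i)) →
      ∀ s, D (φ (monomial s 1)) = weight w s • φ (monomial s 1) := fun hD s => by
    rw [map_diagDerivation hD, diagDerivation_monomial, map_smul]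
  refine ⟨φ (monomial a 1) / φ (monomial b 1), ?_, ?_, ?_⟩
  · exact Derivation.map_div_eq_zero_of_eq_smul _ (hmono hD₁ a) (hμ ▸ hmono hD₁ b)
  · exact Derivation.map_div_eq_zero_of_eq_smul _ (hmono hD₂ a) (hν ▸ hmono hD₂ b)
  · rintro ⟨c, hc⟩
    have hb : φ (monomial b 1) ≠ 0 :=
      (hφ.ne_iff' (map_zero φ)).mpr (monomial_eq_zero.not.mpr one_ne_zero)
    rw [eq_div_iff hb, ← Algebra.smul_def, ← map_smul, smul_monomial, smul_eq_mul, mul_one] at hc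
    rcases (monomial_eq_monomial_iff _ _ _ _).mp (hφ hc) with ⟨hba, -⟩ | ⟨-, h10⟩
    · exact hab hba.symm
    · exact one_ne_zero h10

theorem inter_constants_eq_range_iff (hφ : Function.Injective φ)
    (hfrac : ∀ f : K, ∃ p q, φ q ≠ 0 ∧ φ p = f * φ q)
    (hD₁ : ∀ i, D₁ (φ (X i)) = μ i • φ (X i)) (hD₂ : ∀ i, D₂ (φ (X i)) = ν i • φ (X i)) :
    {f | D₁ f = 0} ∩ {f | D₂ f = 0} = Set.range (algebraMap k K) ↔
      ∀ a b : σ →₀ ℕ, weight μ a = weight μ b → weight ν a = weight ν b → a = b := by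
  constructor
  · intro h a b hμ hν
    by_contra hab
    obtain ⟨f, h₁, h₂, hf⟩ := exists_notMem_range_algebraMap_of_weight_eq hφ hD₁ hD₂ hab hμ hν
    exact hf (h ▸ ⟨h₁, h₂⟩)
  · intro hinj
    refine subset_antisymm (fun f ⟨h₁, h₂⟩ =>
      mem_range_algebraMap_of_weight_injective hφ hD₁ hD₂ hinj (hfrac f) h₁ h₂) ?_
    rintro _ ⟨c, rfl⟩
    exact ⟨D₁.map_algebraMap c, D₂.map_algebraMap c⟩

end Constants

end MvPolynomial

section Fourier

variable {R k : Type*} [CommRing R] [Fintype R] [Field k]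

def fourierMatrix (ψ : AddChar R k) : Matrix R R k :=
  Matrix.of fun i j => ψ (-(i * j))

theorem fourierMatrix_mul_eq_one [DecidableEq R] {ψ : AddChar R k} (hψ : ψ.IsPrimitive)
    (hR : (Fintype.card R : k) ≠ 0) :
    fourierMatrix ψ * (Fintype.card R : k)⁻¹ • Matrix.of (fun i j => ψ (i * j)) = 1 := by
  rw [Matrix.mul_smul]
  ext i l
  have h : ∀ j, ψ (-(i * j)) * ψ (j * l) = ψ (j * (l - i)) := fun j => by
    rw [← AddChar.map_add_eq_mul]; ring_nf
  simp only [Matrix.smul_apply, Matrix.mul_apply, fourierMatrix, Matrix.of_apply, h,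
    AddChar.sum_mulShift _ hψ, sub_eq_zero, Matrix.one_apply, eq_comm (a := l), smul_eq_mul]
  split_ifs
  · exact inv_mul_cancel₀ hR
  · rw [Nat.cast_zero, mul_zero]

theorem map_sum_addChar_smul_of_shift {M : Type*} [AddCommGroup M] [Module k M]
    (L : M →ₗ[k] M) {x : R → M} (hL : ∀ j, L (x j) = x (j + 1)) (ψ : AddChar R k) (i : R) :
    L (∑ j, ψ (-(i * j)) • x j) = ψ i • ∑ j, ψ (-(i * j)) • x j := by
  simp only [map_sum, map_smul, hL, Finset.smul_sum, smul_smul, ← AddChar.map_add_eq_mul]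
  exact Fintype.sum_equiv (Equiv.addRight 1) _ _ fun j => by
    simp only [Equiv.coe_addRight]
    ring_nf

end Fourier

section RootsOfUnity

variable {k : Type*} [Field k]

theorem IsPrimitiveRoot.eq_of_sum_smul_pow_eq_zero [CharZero k] {p : ℕ} [hp : Fact p.Prime]
    {ε : k} (hε : IsPrimitiveRoot ε p) {c : ZMod p → ℚ} (h : ∑ i, c i • ε ^ i.val = 0)
    (i j : ZMod p) : c i = c j := by
  obtain ⟨q, rfl⟩ : ∃ q, p = q + 1 := ⟨p - 1, (Nat.sub_add_cancel hp.out.one_le).symm⟩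
  have hli := linearIndependent_pow (K := ℚ) ε
  rw [← Polynomial.cyclotomic_eq_minpoly_rat hε q.succ_pos, Polynomial.natDegree_cyclotomic,
    Nat.totient_prime hp.out, Nat.add_sub_cancel] at hli
  have hgeom : ∑ i : Fin (q + 1), ε ^ (i : ℕ) = 0 := by
    rw [Fin.sum_univ_eq_sum_range (ε ^ ·)]
    exact hε.geom_sum_eq_zero hp.out.one_lt
  have hsum : ∑ i : Fin (q + 1), (c i - c (Fin.last q)) • ε ^ (i : ℕ) = 0 := by
    simp only [sub_smul, Finset.sum_sub_distrib, ← Finset.smul_sum, hgeom, smul_zero, sub_zero]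
    exact h
  rw [Fin.sum_univ_castSucc, sub_self, zero_smul, add_zero] at hsum
  have hcast := Fintype.linearIndependent_iff.mp hli _ hsum
  suffices hlast : ∀ i : Fin (q + 1), c i = c (Fin.last q) from (hlast i).trans (hlast j).symm
  intro i
  induction i using Fin.lastCases with
  | last => rfl
  | cast i => exact sub_eq_zero.mp (hcast i)

theorem eq_of_weight_eq_of_prime [CharZero k] {p : ℕ} [hp : Fact p.Prime] {ε : k}
    (hε : IsPrimitiveRoot ε p) {a b : ZMod p →₀ ℕ}
    (hμ : weight (AddChar.zmodChar p hε.pow_eq_one) a =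
      weight (AddChar.zmodChar p hε.pow_eq_one) b)
    (hν : weight (1 : ZMod p → k) a = weight 1 b) : a = b := by
  set c : ZMod p → ℚ := fun i => (a i : ℚ) - b i
  rw [Finsupp.weight_eq_sum, Finsupp.weight_eq_sum] at hμ hν
  have hrel : ∑ i, c i • ε ^ i.val = 0 := by
    simp only [AddChar.zmodChar_apply] at hμ
    simp only [c, sub_smul, Finset.sum_sub_distrib, Nat.cast_smul_eq_nsmul, hμ, sub_self]
  have hc : ∀ i, c i = c 0 := fun i => hε.eq_of_sum_smul_pow_eq_zero hrel i 0
  have hsum : ∑ i, c i = 0 := by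
    simp only [Pi.one_apply, nsmul_eq_mul, mul_one] at hν
    simp only [c, Finset.sum_sub_distrib]
    exact_mod_cast sub_eq_zero.mpr hν
  rw [Finset.sum_congr rfl fun i _ => hc i, Finset.sum_const, Finset.card_univ, ZMod.card,
    nsmul_eq_mul, mul_eq_zero] at hsum
  ext i
  have hci : (a i : ℚ) - b i = 0 :=
    (hc i).trans (hsum.resolve_left (Nat.cast_ne_zero.mpr hp.out.ne_zero))
  exact_mod_cast sub_eq_zero.mp hci

theorem exists_ne_weight_eq_of_not_prime {n : ℕ} [NeZero n] (hn : 2 ≤ n) (hnp : ¬ n.Prime)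
    {ψ : AddChar (ZMod n) k} (hψ : ψ.IsPrimitive) :
    ∃ a b : ZMod n →₀ ℕ, a ≠ b ∧ weight ψ a = weight ψ b ∧
      weight (1 : ZMod n → k) a = weight 1 b := by
  classical
  obtain ⟨m, hmn, hm2, hmlt⟩ := Nat.exists_dvd_of_not_prime2 hn hnp
  set H := AddSubgroup.zmultiples (m : ZMod n)
  have hψm : ψ m ≠ 1 := by
    rw [Ne, hψ.zmod_char_eq_one_iff n, ZMod.natCast_eq_zero_iff]
    exact fun h => (Nat.le_of_dvd (by omega) h).not_gt hmlt
  have hψH : ∑ x : H, ψ x = 0 :=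
    AddChar.sum_eq_zero_of_ne_one (ψ := ψ.compAddMonoidHom H.subtype)
      (AddChar.ne_one_iff.mpr ⟨⟨m, AddSubgroup.mem_zmultiples _⟩, hψm⟩)
  have hψ1 : ∑ x, ψ x = 0 := AddChar.sum_eq_zero_of_ne_one (AddChar.ne_one_iff.mpr ⟨m, hψm⟩)
  have hcard : m * Fintype.card H = n := by
    rw [← Nat.card_eq_fintype_card, Nat.card_zmultiples, ZMod.addOrderOf_coe _ (NeZero.ne n),
      Nat.gcd_eq_right hmn, Nat.mul_div_cancel' hmn]
  refine ⟨Finsupp.equivFunOnFinite.symm fun i => if i ∈ H then m else 0,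
    Finsupp.equivFunOnFinite.symm 1, fun h => ?_, ?_, ?_⟩
  · have h0 := DFunLike.congr_fun h 0
    simp only [Finsupp.equivFunOnFinite_symm_apply_apply, zero_mem, if_true, Pi.one_apply] at h0
    omega
  all_goals simp only [Finsupp.weight_eq_sum, Finsupp.equivFunOnFinite_symm_apply_apply,
    ite_smul, zero_smul, Finset.sum_ite, Finset.sum_const_zero, add_zero, ← Finset.smul_sum,
    Pi.one_apply, one_smul]
  · rw [hψ1, Finset.sum_subtype (p := (· ∈ H)) _ (fun _ => by simp) ψ, hψH, smul_zero]
  · rw [Finset.sum_const, Finset.sum_const, ← Fintype.card_subtype, smul_smul, hcard,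
      Finset.card_univ, ZMod.card]

theorem weight_injective_iff_prime [CharZero k] {n : ℕ} [NeZero n] (hn : 2 ≤ n) {ε : k}
    (hε : IsPrimitiveRoot ε n) :
    (∀ a b : ZMod n →₀ ℕ, weight (AddChar.zmodChar n hε.pow_eq_one) a =
        weight (AddChar.zmodChar n hε.pow_eq_one) b →
      weight (1 : ZMod n → k) a = weight 1 b → a = b) ↔ n.Prime := by
  refine ⟨fun hinj => by_contra fun hnp => ?_, fun hp a b => ?_⟩
  · obtain ⟨a, b, hab, hμ, hν⟩ := exists_ne_weight_eq_of_not_prime hn hnp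
      (AddChar.zmodChar_primitive_of_primitive_root n hε)
    exact hab (hinj a b hμ hν)
  · have : Fact n.Prime := ⟨hp⟩
    exact eq_of_weight_eq_of_prime hε

end RootsOfUnity

/-- `k(X)^d ∩ k(X)^E = k` if and only if `n` is prime, where `d` is the
cyclotomic derivation (`d(x_j) = x_{j+1}`) and `E` the Euler derivation (`E(x_j) = x_j`)
of `k(X) = k(x_0,…,x_{n-1})`, indices mod `n`. -/
theorem stmt_9 {k : Type*} [Field k] [CharZero k] (n : ℕ) (hn : 3 ≤ n)
    (ε : k) (hε : IsPrimitiveRoot ε n)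
    (d E : Derivation k (FractionRing (MvPolynomial (ZMod n) k))
      (FractionRing (MvPolynomial (ZMod n) k)))
    (hd : ∀ j : ZMod n,
      d (algebraMap (MvPolynomial (ZMod n) k) (FractionRing (MvPolynomial (ZMod n) k)) (X j))
        = algebraMap (MvPolynomial (ZMod n) k) (FractionRing (MvPolynomial (ZMod n) k))
            (X (j + 1)))
    (hE : ∀ j : ZMod n,
      E (algebraMap (MvPolynomial (ZMod n) k) (FractionRing (MvPolynomial (ZMod n) k)) (X j))
        = algebraMap (MvPolynomial (ZMod n) k) (FractionRing (MvPolynomial (ZMod n) k)) (X j)) :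
    ({f : FractionRing (MvPolynomial (ZMod n) k) | d f = 0}
        ∩ {f : FractionRing (MvPolynomial (ZMod n) k) | E f = 0}
      = Set.range (algebraMap k (FractionRing (MvPolynomial (ZMod n) k))))
      ↔ n.Prime := by
  have : NeZero n := ⟨by omega⟩
  set ψ := AddChar.zmodChar n hε.pow_eq_one
  have hsubst := linearSubst_bijective (fourierMatrix_mul_eq_one
    (AddChar.zmodChar_primitive_of_primitive_root n hε) (by simp [NeZero.ne n]))
  set φ := (IsScalarTower.toAlgHom k _ (FractionRing (MvPolynomial (ZMod n) k))).comp
    (linearSubst (fourierMatrix ψ))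
  have hφX : ∀ i, φ (X i) = ∑ j, ψ (-(i * j)) • algebraMap (MvPolynomial (ZMod n) k) _ (X j) :=
    fun i => by
      simp only [φ, AlgHom.comp_apply, linearSubst_X, map_sum, map_smul, fourierMatrix,
        Matrix.of_apply, IsScalarTower.coe_toAlgHom']
  have hφd : ∀ i, d (φ (X i)) = ψ i • φ (X i) := fun i => by
    rw [hφX]
    exact map_sum_addChar_smul_of_shift d.toLinearMap hd ψ i
  have hφE : ∀ i, E (φ (X i)) = (1 : ZMod n → k) i • φ (X i) := fun i => by
    simp [hφX, hE]
  rw [inter_constants_eq_range_iff ((IsFractionRing.injective _ _).comp hsubst.injective)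
    (IsFractionRing.exists_map_eq_mul_of_surjective hsubst.surjective) hφd hφE]
  exact weight_injective_iff_prime (by omega) hε
end

section
/- Let n_0 be the largest square-free divisor of n and n′ = n/n_0. Then ν(n) = n′ · ν(n_0), where ν(m) denotes the number of minimal elements of the monoid M_m. -/
/-!
Write `i < m k` as `i = r + k q` with `r < k`. For `ω = e^{2πi/(mk)}` one has `ω ^ k = ε_m`,
so `H_α(ω) = ∑_r ω^r H_{α_r}(ε_m)` where `α_r = (α_{r + kq})_q`. When `φ(mk) = k φ(m)`, which
is the case for `m = n₀` and `k = n'` because `n` and `n₀` have the same prime factors, a degree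
count shows that `1, ω, …, ω^{k-1}` are linearly independent over `ℚ(ε_m)`; hence `α ∈ M_{mk}`
iff every `α_r ∈ M_m`, i.e. `M_{mk} ≅ M_m^k`. In a product of monoids without nontrivial units
the minimal elements are exactly the minimal elements of one factor placed in one coordinate,
so `ν(mk) = k ν(m)`.
-/

/-- The monoid `M_m` of all `α ∈ ℕ^m` with `α_0 + α_1 ε + ⋯ + α_{m-1} ε^{m-1} = 0`,
where `ε = exp(2πi/m)` is the fixed primitive `m`-th root of unity in `ℂ`. -/
noncomputable def cycMonoidC (m : ℕ) : Set (Fin m → ℕ) :=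
  {α | ∑ i : Fin m, (α i : ℂ) * Complex.exp (2 * Real.pi * Complex.I / m) ^ (i : ℕ) = 0}

/-- The set of minimal elements of `M_m`: nonzero elements that are not the sum of two
nonzero elements of `M_m`. -/
noncomputable def cycMinimalC (m : ℕ) : Set (Fin m → ℕ) :=
  {α ∈ cycMonoidC m | α ≠ 0 ∧
    ¬∃ β γ : Fin m → ℕ, β ∈ cycMonoidC m ∧ γ ∈ cycMonoidC m ∧ β ≠ 0 ∧ γ ≠ 0 ∧ α = β + γ}

/-- `ν(m)`: the number of minimal elements of the monoid `M_m`. -/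
noncomputable def nuC (m : ℕ) : ℕ := (cycMinimalC m).ncard

open Polynomial

section IsMinimalIn

variable {M N : Type*} [AddCommMonoid M] [AddCommMonoid N]

def IsMinimalIn (S : Set M) (a : M) : Prop :=
  a ∈ S ∧ a ≠ 0 ∧ ¬∃ b c, b ∈ S ∧ c ∈ S ∧ b ≠ 0 ∧ c ≠ 0 ∧ a = b + c

theorem cycMinimalC_eq_setOf_isMinimalIn (m : ℕ) :
    cycMinimalC m = {α | IsMinimalIn (cycMonoidC m) α} := rfl

theorem isMinimalIn_congr (e : M ≃+ N) {S : Set M} {T : Set N} (hST : ∀ a, a ∈ S ↔ e a ∈ T)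
    (a : M) : IsMinimalIn S a ↔ IsMinimalIn T (e a) := by
  have hTS : ∀ b, b ∈ T ↔ e.symm b ∈ S := fun b => by rw [hST, e.apply_symm_apply]
  unfold IsMinimalIn
  rw [hST a, Ne, Ne, EmbeddingLike.map_eq_zero_iff]
  refine and_congr_right fun _ => and_congr_right fun _ => not_congr ⟨?_, ?_⟩
  · rintro ⟨b, c, hb, hc, hb0, hc0, rfl⟩
    exact ⟨e b, e c, (hST b).1 hb, (hST c).1 hc, by simpa using hb0, by simpa using hc0,
      map_add e b c⟩
  · rintro ⟨b, c, hb, hc, hb0, hc0, h⟩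
    exact ⟨e.symm b, e.symm c, (hTS b).1 hb, (hTS c).1 hc, by simpa using hb0,
      by simpa using hc0, e.injective (by simp [h])⟩

theorem ncard_setOf_isMinimalIn_congr (e : M ≃+ N) {S : Set M} {T : Set N}
    (hST : ∀ a, a ∈ S ↔ e a ∈ T) :
    {b | IsMinimalIn T b}.ncard = {a | IsMinimalIn S a}.ncard := by
  rw [← Nat.card_coe_set_eq, ← Nat.card_coe_set_eq]
  exact Nat.card_congr (e.toEquiv.subtypeEquiv (isMinimalIn_congr e hST)).symm

end IsMinimalIn

section Pi

variable {ι M : Type*} [DecidableEq ι] [AddCommMonoid M] {S : Set M}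

theorem single_mem_univ_pi (h0 : 0 ∈ S) {a : M} (ha : a ∈ S) (i : ι) :
    Pi.single i a ∈ Set.univ.pi fun _ : ι => S :=
  (Set.update_mem_pi_iff_of_mem (Set.mem_univ_pi.2 fun _ => h0)).2 fun _ => ha

theorem IsMinimalIn.pi_single [Subsingleton (AddUnits M)] (h0 : 0 ∈ S) {a : M}
    (ha : IsMinimalIn S a) (i : ι) : IsMinimalIn (Set.univ.pi fun _ => S) (Pi.single i a) := by
  obtain ⟨haS, ha0, hamin⟩ := ha
  refine ⟨single_mem_univ_pi h0 haS i, by simpa using ha0, ?_⟩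
  rintro ⟨b, c, hb, hc, hb0, hc0, hbc⟩
  have hoff : ∀ j ≠ i, b j = 0 ∧ c j = 0 := fun j hj =>
    add_eq_zero.1 (by rw [← Pi.add_apply, ← hbc, Pi.single_eq_of_ne hj])
  have eq_single : ∀ f : ι → M, (∀ j ≠ i, f j = 0) → f = Pi.single i (f i) := fun f hf =>
    funext fun j => by
      by_cases hj : j = i
      · subst hj; simp
      · simp [hj, hf j hj]
  have hb' := eq_single b fun j hj => (hoff j hj).1
  have hc' := eq_single c fun j hj => (hoff j hj).2
  refine hamin ⟨b i, c i, hb i trivial, hc i trivial, fun h => hb0 ?_, fun h => hc0 ?_, ?_⟩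
  · rw [hb', h, Pi.single_zero]
  · rw [hc', h, Pi.single_zero]
  · simpa using congrFun hbc i

theorem IsMinimalIn.exists_pi_single_eq (h0 : 0 ∈ S) {α : ι → M}
    (h : IsMinimalIn (Set.univ.pi fun _ => S) α) :
    ∃ i, IsMinimalIn S (α i) ∧ Pi.single i (α i) = α := by
  obtain ⟨hα, hα0, hαmin⟩ := h
  obtain ⟨i, hi⟩ : ∃ i, α i ≠ 0 := Function.ne_iff.1 hα0
  have hsplit : Pi.single i (α i) + Function.update α i 0 = α := by
    funext j
    by_cases hj : j = i
    · subst hj; simp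
    · simp [hj]
  have hα_eq : Pi.single i (α i) = α := by
    by_contra hne
    refine hαmin ⟨_, _, single_mem_univ_pi h0 (hα i trivial) i,
      (Set.update_mem_pi_iff_of_mem hα).2 fun _ => h0, by simpa using hi, fun h => hne ?_,
      hsplit.symm⟩
    simpa [h] using hsplit
  refine ⟨i, ⟨hα i trivial, hi, ?_⟩, hα_eq⟩
  rintro ⟨b, c, hb, hc, hb0, hc0, hbc⟩
  refine hαmin ⟨Pi.single i b, Pi.single i c, single_mem_univ_pi h0 hb i,
    single_mem_univ_pi h0 hc i,
    by simpa using hb0, by simpa using hc0, ?_⟩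
  rw [← hα_eq, hbc, Pi.single_add]

theorem ncard_setOf_isMinimalIn_pi [Fintype ι] [Subsingleton (AddUnits M)] (h0 : 0 ∈ S) :
    {α : ι → M | IsMinimalIn (Set.univ.pi fun _ => S) α}.ncard =
      Fintype.card ι * {a | IsMinimalIn S a}.ncard := by
  have himage : {α : ι → M | IsMinimalIn (Set.univ.pi fun _ => S) α} =
      (fun p : ι × M => (Pi.single p.1 p.2 : ι → M)) ''
        (Set.univ ×ˢ {a | IsMinimalIn S a}) := by
    ext α
    constructor
    · intro hα
      obtain ⟨i, hi, hα_eq⟩ := hα.exists_pi_single_eq h0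
      exact ⟨(i, α i), ⟨trivial, hi⟩, hα_eq⟩
    · rintro ⟨⟨i, a⟩, ⟨-, ha⟩, rfl⟩
      exact ha.pi_single h0 i
  have hinj : Set.InjOn (fun p : ι × M => (Pi.single p.1 p.2 : ι → M))
      (Set.univ ×ˢ {a | IsMinimalIn S a}) := by
    rintro ⟨i, a⟩ ⟨-, ha⟩ ⟨j, b⟩ - hij
    obtain rfl : i = j := by
      by_contra hne
      exact ha.2.1 (by simpa [Pi.single_eq_of_ne hne] using congrFun hij i)
    simpa using hij
  rw [himage, hinj.ncard_image, Set.ncard_prod, Set.ncard_univ, Nat.card_eq_fintype_card]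

end Pi

-- The powers `x ^ (r + k * j)` with `r < k` and `j < deg (x ^ k)` are distinct and below `deg x`.
theorem eq_zero_of_sum_pow_mul_eq_zero {K L : Type*} [Field K] [CommRing L] [Algebra K L]
    {x : L} {k : ℕ} (hx : IsIntegral K x)
    (hdeg : (minpoly K (x ^ k)).natDegree * k ≤ (minpoly K x).natDegree)
    {c : Fin k → L} (hc : ∀ r, ∃ f : K[X], c r = aeval (x ^ k) f)
    (hsum : ∑ r : Fin k, x ^ (r : ℕ) * c r = 0) (r : Fin k) : c r = 0 := by
  choose b hb using fun r => (Submodule.mem_span_range_iff_exists_fun K).1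
    ((hx.pow k).mem_span_pow (hc r))
  have hli : LinearIndependent K fun p : Fin (minpoly K (x ^ k)).natDegree × Fin k =>
      x ^ ((finProdFinEquiv p : Fin _) : ℕ) :=
    (linearIndependent_pow x).comp (Fin.castLE hdeg ∘ finProdFinEquiv)
      ((Fin.castLE_injective hdeg).comp finProdFinEquiv.injective)
  have hb0 := Fintype.linearIndependent_iff.1 hli (fun p => b p.2 p.1) <| by
    rw [Fintype.sum_prod_type, Finset.sum_comm, ← hsum]
    refine Finset.sum_congr rfl fun r _ => ?_
    rw [← hb r, Finset.mul_sum]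
    refine Finset.sum_congr rfl fun j _ => ?_
    rw [finProdFinEquiv_apply_val, mul_smul_comm, ← pow_mul, ← pow_add]
  rw [← hb r]
  exact Finset.sum_eq_zero fun j _ => by rw [hb0 (j, r), zero_smul]

theorem IsPrimitiveRoot.natDegree_minpoly_rat {K : Type*} [Field K] [CharZero K] {ζ : K} {n : ℕ}
    (h : IsPrimitiveRoot ζ n) (hn : n ≠ 0) : (minpoly ℚ ζ).natDegree = n.totient := by
  rw [← cyclotomic_eq_minpoly_rat h (Nat.pos_of_ne_zero hn), natDegree_cyclotomic]

-- Since `finProdFinEquiv (q, r) = r + k * q`, the block `residueBlocks m k α r` is `α` read along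
-- the residue class of `r` modulo `k`.
def residueBlocks (m k : ℕ) : (Fin (m * k) → ℕ) ≃+ (Fin k → Fin m → ℕ) where
  toFun α r q := α (finProdFinEquiv (q, r))
  invFun β i := β (finProdFinEquiv.symm i).2 (finProdFinEquiv.symm i).1
  left_inv α := funext fun i => congrArg α (finProdFinEquiv.apply_symm_apply i)
  right_inv β := funext fun r => funext fun q => by simp
  map_add' _ _ := rfl

theorem sum_mul_pow_eq_sum_pow_mul_residueBlocks {R : Type*} [CommSemiring R] {m k : ℕ}
    (α : Fin (m * k) → ℕ) {x y : R} (hxy : x ^ k = y) :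
    ∑ i, (α i : R) * x ^ (i : ℕ) =
      ∑ r : Fin k, x ^ (r : ℕ) * ∑ q, (residueBlocks m k α r q : R) * y ^ (q : ℕ) := by
  rw [← finProdFinEquiv.sum_comp, Fintype.sum_prod_type, Finset.sum_comm]
  refine Finset.sum_congr rfl fun r _ => ?_
  rw [Finset.mul_sum]
  refine Finset.sum_congr rfl fun q _ => ?_
  rw [finProdFinEquiv_apply_val, pow_add, pow_mul, hxy]
  simp only [residueBlocks, AddEquiv.coe_mk, Equiv.coe_fn_mk]
  ring

theorem exp_two_pi_I_div_natCast_mul_pow {m k : ℕ} (hm : m ≠ 0) (hk : k ≠ 0) :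
    Complex.exp (2 * Real.pi * Complex.I / ((m * k : ℕ) : ℂ)) ^ k =
      Complex.exp (2 * Real.pi * Complex.I / m) := by
  rw [← Complex.exp_nat_mul]
  congr 1
  push_cast
  field_simp

theorem mem_cycMonoidC_mul_iff {m k : ℕ} (hm : m ≠ 0) (hk : k ≠ 0)
    (htot : (m * k).totient = k * m.totient) (α : Fin (m * k) → ℕ) :
    α ∈ cycMonoidC (m * k) ↔ residueBlocks m k α ∈ Set.univ.pi fun _ => cycMonoidC m := by
  set ω := Complex.exp (2 * Real.pi * Complex.I / ((m * k : ℕ) : ℂ))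
  set ε := Complex.exp (2 * Real.pi * Complex.I / m)
  have hω : IsPrimitiveRoot ω (m * k) := Complex.isPrimitiveRoot_exp _ (mul_ne_zero hm hk)
  have hε : IsPrimitiveRoot ε m := Complex.isPrimitiveRoot_exp m hm
  have hωε : ω ^ k = ε := exp_two_pi_I_div_natCast_mul_pow hm hk
  simp only [cycMonoidC, Set.mem_ofPred_eq, Set.mem_univ_pi]
  rw [sum_mul_pow_eq_sum_pow_mul_residueBlocks α hωε]
  refine ⟨fun h r => ?_, fun h => Finset.sum_eq_zero fun r _ => by rw [h r, mul_zero]⟩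
  refine eq_zero_of_sum_pow_mul_eq_zero ((hω.isIntegral (by positivity)).tower_top) ?_
    (fun r => ⟨∑ q, C (residueBlocks m k α r q : ℚ) * X ^ (q : ℕ), ?_⟩) h r
  · rw [hωε, hω.natDegree_minpoly_rat (mul_ne_zero hm hk), hε.natDegree_minpoly_rat hm, htot,
      mul_comm]
  · simp [hωε, map_sum]

theorem nuC_mul {m k : ℕ} (hm : m ≠ 0) (hk : k ≠ 0) (htot : (m * k).totient = k * m.totient) :
    nuC (m * k) = k * nuC m := by
  rw [nuC, nuC, cycMinimalC_eq_setOf_isMinimalIn, cycMinimalC_eq_setOf_isMinimalIn,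
    ← ncard_setOf_isMinimalIn_congr _ (mem_cycMonoidC_mul_iff hm hk htot),
    ncard_setOf_isMinimalIn_pi (by simp [cycMonoidC]), Fintype.card_fin]

theorem Nat.totient_eq_div_prod_primeFactors_mul_totient (n : ℕ) :
    n.totient = (n / ∏ p ∈ n.primeFactors, p) * (∏ p ∈ n.primeFactors, p).totient := by
  have hpf : (∏ p ∈ n.primeFactors, p).primeFactors = n.primeFactors :=
    Nat.primeFactors_prod fun p hp => Nat.prime_of_mem_primeFactors hp
  have hpos : 0 < ∏ p ∈ n.primeFactors, p :=
    Finset.prod_pos fun p hp => (Nat.prime_of_mem_primeFactors hp).pos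
  rw [Nat.totient_eq_div_primeFactors_mul n,
    Nat.totient_eq_div_primeFactors_mul (∏ p ∈ n.primeFactors, p), hpf, Nat.div_self hpos,
    one_mul]

/-- If `n₀` is the largest square-free divisor of `n` and `n' = n/n₀`,
then `ν(n) = n' · ν(n₀)`. -/
theorem stmt_11 (n : ℕ) (hn : 3 ≤ n) :
    nuC n = (n / ∏ p ∈ n.primeFactors, p) * nuC (∏ p ∈ n.primeFactors, p) := by
  set n₀ := ∏ p ∈ n.primeFactors, p
  have hn₀ : n₀ ≠ 0 :=
    Finset.prod_ne_zero_iff.2 fun p hp => (Nat.prime_of_mem_primeFactors hp).ne_zero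
  have hdvd : n₀ ∣ n := Nat.prod_primeFactors_dvd n
  have hk : n / n₀ ≠ 0 :=
    (Nat.div_pos (Nat.le_of_dvd (by omega) hdvd) (Nat.pos_of_ne_zero hn₀)).ne'
  have hmul : n₀ * (n / n₀) = n := Nat.mul_div_cancel' hdvd
  have h := nuC_mul hn₀ hk <| by
    rw [hmul]
    exact Nat.totient_eq_div_prod_primeFactors_mul_totient n
  rwa [hmul] at h
end

section
/- For all n ≥ 3 one has ν(n) ≥ ξ(n), where ν(n) is the number of minimal elements of the monoid M_n and ξ(n) = Σ_{p | n, p prime} n/p. -/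
/-- The monoid `M_n` of all `α ∈ ℕ^n` with `α_0 + α_1 ε + ⋯ + α_{n-1} ε^{n-1} = 0`. -/
def cycMonoid (n : ℕ) {k : Type*} [Field k] (ε : k) : Set (Fin n → ℕ) :=
  {α | ∑ i : Fin n, (α i : k) * ε ^ (i : ℕ) = 0}

/-- The set of minimal elements of `M_n`: nonzero elements that are not the sum of two
nonzero elements of `M_n`. -/
def cycMinimal (n : ℕ) {k : Type*} [Field k] (ε : k) : Set (Fin n → ℕ) :=
  {α ∈ cycMonoid n ε | α ≠ 0 ∧
    ¬∃ β γ : Fin n → ℕ, β ∈ cycMonoid n ε ∧ γ ∈ cycMonoid n ε ∧ β ≠ 0 ∧ γ ≠ 0 ∧ α = β + γ}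

/-!
For a prime `p ∣ n` put `m = n / p` and `ζ = ε ^ m`, a primitive `p`-th root of unity. The
indicator vector of a residue class `j` modulo `m` lies in `M_n`, its value being
`ε ^ j * (1 + ζ + ⋯ + ζ ^ (p - 1)) = 0`. It is minimal: an element of `M_n` below it is supported
on the class, and since `Φ_p = 1 + X + ⋯ + X ^ (p - 1)` is the minimal polynomial of `ζ` over `ℚ`,
its coefficients along the class are all equal. These `∑ n / p` vectors are pairwise distinct,
and the minimal elements form an antichain of `ℕ ^ n`, which is finite by Dickson's lemma.
-/

open Polynomial

theorem IsPrimitiveRoot.eq_of_sum_mul_pow_eq_zero {k : Type*} [Field k] [CharZero k] {p : ℕ}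
    [hp : Fact p.Prime] {ζ : k} (hζ : IsPrimitiveRoot ζ p) {c : Fin p → ℚ}
    (h : ∑ t, (c t : k) * ζ ^ (t : ℕ) = 0) (s t : Fin p) : c s = c t := by
  set f := ofFn p c
  have hf : aeval ζ f = 0 := by
    simpa [f, ofFn_eq_sum_monomial, aeval_monomial] using h
  have hdvd : cyclotomic p ℚ ∣ f := by
    rw [cyclotomic_eq_minpoly_rat hζ hp.out.pos]
    exact minpoly.dvd ℚ ζ hf
  have hdeg : f.natDegree ≤ (cyclotomic p ℚ).natDegree := by
    rw [natDegree_cyclotomic, Nat.totient_prime hp.out]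
    exact Nat.le_pred_of_lt (ofFn_natDegree_lt hp.out.one_lt.le c)
  -- Hence `f = Φ_p * C a`, and all `p` coefficients of `Φ_p = 1 + X + ⋯ + X ^ (p - 1)` are `1`
  have hf_eq := eq_mul_leadingCoeff_of_monic_of_dvd_of_natDegree_le
    (cyclotomic.monic p ℚ) hdvd hdeg
  have hcoeff (t : Fin p) : c t = f.leadingCoeff := by
    simpa [f, coeff_mul_C, cyclotomic_prime, finsetSum_coeff, coeff_X_pow] using
      congrArg (coeff · t) hf_eq
  rw [hcoeff s, hcoeff t]

theorem sum_mul_pow_eq_of_mod_eq {R : Type*} [CommSemiring R] {p m j : ℕ} (hj : j < m) (ε : R)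
    (β : Fin (p * m) → R) (hβ : ∀ i : Fin (p * m), (i : ℕ) % m ≠ j → β i = 0) :
    ∑ i, β i * ε ^ (i : ℕ) =
      ε ^ j * ∑ t : Fin p, β (finProdFinEquiv (t, ⟨j, hj⟩)) * (ε ^ m) ^ (t : ℕ) := by
  rw [← finProdFinEquiv.sum_comp, Fintype.sum_prod_type, Finset.mul_sum]
  refine Finset.sum_congr rfl fun t _ => ?_
  rw [Finset.sum_eq_single ⟨j, hj⟩]
  · rw [finProdFinEquiv_apply_val, ← pow_mul, mul_left_comm, ← pow_add, add_comm]
  · intro r _ hr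
    refine mul_eq_zero_of_left (hβ _ ?_) _
    rw [finProdFinEquiv_apply_val, Nat.add_mul_mod_self_left, Nat.mod_eq_of_lt r.2]
    exact fun h => hr (Fin.ext h)
  · simp

def cosetIndicator (n m j : ℕ) : Fin n → ℕ := fun i => if (i : ℕ) % m = j then 1 else 0

theorem cosetIndicator_eq_one_iff {n m j : ℕ} {i : Fin n} :
    cosetIndicator n m j i = 1 ↔ (i : ℕ) % m = j := by
  unfold cosetIndicator; split_ifs <;> simp_all

theorem cosetIndicator_of_mod_ne {n m j : ℕ} {i : Fin n} (hi : (i : ℕ) % m ≠ j) :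
    cosetIndicator n m j i = 0 := if_neg hi

section CosetIndicator

variable {k : Type*} [Field k] {p m j : ℕ} [Fact p.Prime] {ε : k}

theorem cosetIndicator_mem_cycMonoid (hj : j < m) (hε : IsPrimitiveRoot ε (p * m)) :
    cosetIndicator (p * m) m j ∈ cycMonoid (p * m) ε := by
  have hpm : 0 < p * m := Nat.mul_pos (Fact.out : p.Prime).pos (by omega)
  have hζ : IsPrimitiveRoot (ε ^ m) p := hε.pow hpm (mul_comm p m)
  show ∑ i, (cosetIndicator (p * m) m j i : k) * ε ^ (i : ℕ) = 0
  rw [sum_mul_pow_eq_of_mod_eq hj ε _ fun i hi => by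
    rw [cosetIndicator_of_mod_ne hi, Nat.cast_zero]]
  have hone (t : Fin p) : cosetIndicator (p * m) m j (finProdFinEquiv (t, ⟨j, hj⟩)) = 1 := by
    rw [cosetIndicator_eq_one_iff, finProdFinEquiv_apply_val, Nat.add_mul_mod_self_left,
      Nat.mod_eq_of_lt hj]
  refine mul_eq_zero_of_right _ ?_
  simpa [hone, Fin.sum_univ_eq_sum_range (fun t => (ε ^ m) ^ t)] using
    hζ.geom_sum_eq_zero (Fact.out : p.Prime).one_lt

variable [CharZero k]

theorem eq_of_mem_cycMonoid_of_mod_eq (hj : j < m) (hε : IsPrimitiveRoot ε (p * m))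
    {β : Fin (p * m) → ℕ} (hβM : β ∈ cycMonoid (p * m) ε)
    (hβ : ∀ i : Fin (p * m), (i : ℕ) % m ≠ j → β i = 0) {i i' : Fin (p * m)}
    (hi : (i : ℕ) % m = j) (hi' : (i' : ℕ) % m = j) : β i = β i' := by
  have hpm : 0 < p * m := Nat.mul_pos (Fact.out : p.Prime).pos (by omega)
  have hζ : IsPrimitiveRoot (ε ^ m) p := hε.pow hpm (mul_comm p m)
  have hsum : ∑ i, (β i : k) * ε ^ (i : ℕ) = 0 := hβM
  rw [sum_mul_pow_eq_of_mod_eq hj ε _ fun i hi => by rw [hβ i hi, Nat.cast_zero],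
    mul_eq_zero, or_iff_right (pow_ne_zero _ (hε.ne_zero hpm.ne'))] at hsum
  have hconst := hζ.eq_of_sum_mul_pow_eq_zero
    (c := fun t => (β (finProdFinEquiv (t, ⟨j, hj⟩)) : ℚ)) (by simpa using hsum)
  have hdecomp (i : Fin (p * m)) (hi : (i : ℕ) % m = j) :
      i = finProdFinEquiv (i.divNat, ⟨j, hj⟩) := by
    have hmod : i.modNat = ⟨j, hj⟩ := Fin.ext (by rw [Fin.coe_modNat, hi])
    rw [← hmod, ← finProdFinEquiv_symm_apply, Equiv.apply_symm_apply]
  rw [hdecomp i hi, hdecomp i' hi']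
  exact_mod_cast hconst _ _

theorem eq_zero_or_eq_of_le_cosetIndicator (hj : j < m) (hε : IsPrimitiveRoot ε (p * m))
    {β : Fin (p * m) → ℕ} (hβM : β ∈ cycMonoid (p * m) ε)
    (hle : β ≤ cosetIndicator (p * m) m j) : β = 0 ∨ β = cosetIndicator (p * m) m j := by
  have hβ (i : Fin (p * m)) (hi : (i : ℕ) % m ≠ j) : β i = 0 :=
    Nat.eq_zero_of_le_zero ((hle i).trans_eq (cosetIndicator_of_mod_ne hi))
  let i₀ : Fin (p * m) := ⟨j, hj.trans_le (Nat.le_mul_of_pos_left m (Fact.out : p.Prime).pos)⟩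
  have hi₀ : (i₀ : ℕ) % m = j := Nat.mod_eq_of_lt hj
  have hconst (i : Fin (p * m)) (hi : (i : ℕ) % m = j) : β i = β i₀ :=
    eq_of_mem_cycMonoid_of_mod_eq hj hε hβM hβ hi hi₀
  have hle₀ : β i₀ ≤ 1 := (hle i₀).trans_eq (cosetIndicator_eq_one_iff.2 hi₀)
  obtain h₀ | h₁ : β i₀ = 0 ∨ β i₀ = 1 := by omega
  · left
    funext i
    by_cases hi : (i : ℕ) % m = j
    · exact (hconst i hi).trans h₀
    · exact hβ i hi
  · right
    funext i
    by_cases hi : (i : ℕ) % m = j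
    · rw [hconst i hi, h₁, cosetIndicator_eq_one_iff.2 hi]
    · rw [hβ i hi, cosetIndicator_of_mod_ne hi]

end CosetIndicator

theorem cosetIndicator_mem_cycMinimal {k : Type*} [Field k] [CharZero k] {n p m j : ℕ}
    (hp : p.Prime) (hnm : n = p * m) (hj : j < m) {ε : k} (hε : IsPrimitiveRoot ε n) :
    cosetIndicator n m j ∈ cycMinimal n ε := by
  subst hnm
  have := Fact.mk hp
  refine ⟨cosetIndicator_mem_cycMonoid hj hε, fun h => ?_, ?_⟩
  · have := congrFun h ⟨j, hj.trans_le (Nat.le_mul_of_pos_left m hp.pos)⟩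
    simp [cosetIndicator, Nat.mod_eq_of_lt hj] at this
  · rintro ⟨β, γ, hβ, -, hβ0, hγ0, hsum⟩
    have hle : β ≤ cosetIndicator (p * m) m j := fun i => by
      rw [hsum]; exact Nat.le_add_right _ _
    rcases eq_zero_or_eq_of_le_cosetIndicator hj hε hβ hle with h | h
    · exact hβ0 h
    · exact hγ0 (by simpa [h] using hsum)

section Finiteness

variable {k : Type*} [Field k] {n : ℕ} {ε : k}

theorem sub_mem_cycMonoid {α β : Fin n → ℕ} (hα : α ∈ cycMonoid n ε) (hβ : β ∈ cycMonoid n ε)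
    (hle : α ≤ β) : β - α ∈ cycMonoid n ε := by
  have hα' : ∑ i, (α i : k) * ε ^ (i : ℕ) = 0 := hα
  have hβ' : ∑ i, (β i : k) * ε ^ (i : ℕ) = 0 := hβ
  show ∑ i, ((β i - α i : ℕ) : k) * ε ^ (i : ℕ) = 0
  simp only [Nat.cast_sub (hle _), sub_mul, Finset.sum_sub_distrib, hα', hβ', sub_zero]

theorem isAntichain_cycMinimal : IsAntichain (· ≤ ·) (cycMinimal n ε) := by
  rintro α ⟨hα, hα0, -⟩ β ⟨hβ, -, hβmin⟩ hne hle
  refine hβmin ⟨α, β - α, hα, sub_mem_cycMonoid hα hβ hle, hα0, fun h => ?_,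
    (add_tsub_cancel_of_le hle).symm⟩
  exact hne (hle.antisymm (tsub_eq_zero_iff_le.1 h))

theorem cycMinimal_finite : (cycMinimal n ε).Finite :=
  isAntichain_cycMinimal.finite_of_partiallyWellOrderedOn (Set.isPWO_of_wellQuasiOrderedLE _)

end Finiteness

theorem eq_and_eq_of_cosetIndicator_eq {n m m' j j' : ℕ} (hm : 2 * m ≤ n) (hm' : 2 * m' ≤ n)
    (hj : j < m) (hj' : j' < m') (h : cosetIndicator n m j = cosetIndicator n m' j') :
    m = m' ∧ j = j' := by
  have key (i : ℕ) (hi : i < n) : i % m = j ↔ i % m' = j' := by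
    rw [← cosetIndicator_eq_one_iff (i := ⟨i, hi⟩), h, cosetIndicator_eq_one_iff]
  have hjj' : j = j' := by
    have h₁ := (key j (by omega)).1 (Nat.mod_eq_of_lt hj)
    have h₂ := (key j' (by omega)).2 (Nat.mod_eq_of_lt hj')
    have := Nat.mod_le j m'
    have := Nat.mod_le j' m
    omega
  subst hjj'
  -- `j` and `j + m` both lie in the support, so `m' ∣ m`; symmetrically `m ∣ m'`.
  have hdvd : m' ∣ m := by
    have h₁ := (key (j + m) (by omega)).1 (by rw [Nat.add_mod_right, Nat.mod_eq_of_lt hj])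
    refine (Nat.modEq_zero_iff_dvd).1 (Nat.ModEq.add_left_cancel' j ?_)
    rw [add_zero]; exact h₁.trans (Nat.mod_eq_of_lt hj').symm
  have hdvd' : m ∣ m' := by
    have h₁ := (key (j + m') (by omega)).2 (by rw [Nat.add_mod_right, Nat.mod_eq_of_lt hj'])
    refine (Nat.modEq_zero_iff_dvd).1 (Nat.ModEq.add_left_cancel' j ?_)
    rw [add_zero]; exact h₁.trans (Nat.mod_eq_of_lt hj).symm
  exact ⟨Nat.dvd_antisymm hdvd' hdvd, rfl⟩

theorem injOn_cosetIndicator_primeFactors (n : ℕ) :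
    Set.InjOn (fun q : (_ : ℕ) × ℕ => cosetIndicator n (n / q.1) q.2)
      (n.primeFactors.sigma fun p => Finset.range (n / p)) := by
  rintro ⟨p, j⟩ hq ⟨p', j'⟩ hq' h
  simp only [Finset.coe_sigma, Set.mem_sigma_iff, Finset.mem_coe, Nat.mem_primeFactors,
    Finset.mem_range] at hq hq'
  obtain ⟨⟨hp, hpn, hn⟩, hj⟩ := hq
  obtain ⟨⟨hp', hp'n, -⟩, hj'⟩ := hq'
  obtain ⟨hm, rfl⟩ := eq_and_eq_of_cosetIndicator_eq
    ((Nat.mul_le_mul_right _ hp.two_le).trans (Nat.mul_div_le n p))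
    ((Nat.mul_le_mul_right _ hp'.two_le).trans (Nat.mul_div_le n p')) hj hj' h
  have : p = p' := by rw [← Nat.div_div_self hpn hn, hm, Nat.div_div_self hp'n hn]
  subst this
  rfl

theorem stmt_12_general {k : Type*} [Field k] [CharZero k] (n : ℕ)
    (ε : k) (hε : IsPrimitiveRoot ε n) :
    ∑ p ∈ n.primeFactors, n / p ≤ (cycMinimal n ε).ncard := by
  set D := n.primeFactors.sigma fun p => Finset.range (n / p)
  have hmaps : ∀ q ∈ (D : Set ((_ : ℕ) × ℕ)), cosetIndicator n (n / q.1) q.2 ∈ cycMinimal n ε := by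
    rintro ⟨p, j⟩ hq
    simp only [D, Finset.coe_sigma, Set.mem_sigma_iff, Finset.mem_coe, Nat.mem_primeFactors,
      Finset.mem_range] at hq
    exact cosetIndicator_mem_cycMinimal hq.1.1 (Nat.mul_div_cancel' hq.1.2.1).symm hq.2 hε
  calc ∑ p ∈ n.primeFactors, n / p = (D : Set ((_ : ℕ) × ℕ)).ncard := by
        rw [Set.ncard_coe_finset, Finset.card_sigma]; simp only [Finset.card_range]
    _ ≤ (cycMinimal n ε).ncard :=
      Set.ncard_le_ncard_of_injOn _ hmaps (injOn_cosetIndicator_primeFactors n) cycMinimal_finite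

/-- For all `n ≥ 3`, `ν(n) ≥ ξ(n)`, where `ν(n)` is the number of
minimal elements of `M_n` and `ξ(n) = Σ_{p ∣ n prime} n/p`. -/
theorem stmt_12 {k : Type*} [Field k] [CharZero k] (n : ℕ) (hn : 3 ≤ n)
    (ε : k) (hε : IsPrimitiveRoot ε n) :
    ∑ p ∈ n.primeFactors, n / p ≤ (cycMinimal n ε).ncard :=
  stmt_12_general n ε hε
end

section
/- If n is divisible by at least two distinct primes, then ξ(n) + φ(n) > n, where ξ(n) = Σ_{p | n, p prime} n/p and φ is the Euler totient function. -/
lemma stmt_13_aux (S : Finset ℕ) (hS : ∀ p ∈ S, 2 ≤ p) (hne : S.Nonempty) :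
    (∏ p ∈ S, p) + S.card ≤ (∑ p ∈ S, ∏ q ∈ S.erase p, q) + (∏ p ∈ S, (p - 1)) + 1 := by
  induction hne using Finset.Nonempty.cons_induction with
  | singleton a =>
      have : 2 ≤ a := hS a (Finset.mem_singleton_self a)
      simp only [Finset.prod_singleton, Finset.card_singleton, Finset.sum_singleton,
        Finset.erase_singleton, Finset.prod_empty]
      omega
  | cons a s ha hs ih =>
      have ha2 : 2 ≤ a := hS a (Finset.mem_cons_self a s)
      have hs2 : ∀ p ∈ s, 2 ≤ p := fun p hp => hS p (Finset.mem_cons_of_mem hp)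
      have IH := ih hs2
      set Q := ∏ p ∈ s, p with hQ
      set A := ∑ p ∈ s, ∏ q ∈ s.erase p, q with hA
      set B := ∏ p ∈ s, (p - 1) with hB
      have hsum : ∑ p ∈ Finset.cons a s ha, ∏ q ∈ (Finset.cons a s ha).erase p, q
          = Q + a * A := by
        rw [Finset.sum_cons, Finset.erase_cons]
        congr 1
        rw [hA, Finset.mul_sum]
        refine Finset.sum_congr rfl fun p hp => ?_
        have hpa : p ≠ a := fun h => ha (h ▸ hp)
        have : (Finset.cons a s ha).erase p = Finset.cons a (s.erase p)
            (fun h => ha (Finset.mem_of_mem_erase h)) := by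
          ext x
          simp [Finset.mem_erase, Finset.mem_cons]
          constructor
          · rintro ⟨hx, (rfl | hxs)⟩
            · exact Or.inl rfl
            · exact Or.inr ⟨hx, hxs⟩
          · rintro (rfl | ⟨hx, hxs⟩)
            · exact ⟨hpa.symm, Or.inl rfl⟩
            · exact ⟨hx, Or.inr hxs⟩
        rw [this, Finset.prod_cons]
      rw [hsum, Finset.prod_cons, Finset.prod_cons, Finset.card_cons]
      have hk : 1 ≤ s.card := Finset.card_pos.mpr hs
      obtain ⟨b, rfl⟩ : ∃ b, a = b + 1 := ⟨a - 1, by omega⟩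
      have hb : 1 ≤ b := by omega
      simp only [Nat.add_sub_cancel]
      have h1 : b * (Q + s.card) ≤ b * (A + B + 1) := Nat.mul_le_mul_left b IH
      have h2 : s.card + b ≤ b * s.card + 1 := by nlinarith
      rw [← hQ, ← hB]
      have h1' : b * Q + b * s.card ≤ b * A + b * B + b := by
        calc b * Q + b * s.card = b * (Q + s.card) := by ring
          _ ≤ b * (A + B + 1) := h1
          _ = b * A + b * B + b := by ring
      obtain ⟨r, hr⟩ := hs
      have hA1 : 1 ≤ A := by
        rw [hA]
        calc 1 ≤ ∏ q ∈ s.erase r, q :=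
              Finset.one_le_prod' fun q hq => by
                have := hs2 q (Finset.mem_of_mem_erase hq); omega
          _ ≤ ∑ p ∈ s, ∏ q ∈ s.erase p, q :=
              Finset.single_le_sum (f := fun p => ∏ q ∈ s.erase p, q) (fun i _ => Nat.zero_le _) hr
      have hgoal : b * Q + s.card ≤ (b + 1) * A + b * B :=
        by linarith [h1', h2, hA1, show (b + 1) * A = b * A + A from by ring]
      linarith [hgoal, show (b + 1) * Q = b * Q + Q from by ring]

/-- If `n` is divisible by at least two distinct primes, then
`ξ(n) + φ(n) > n`, where `ξ(n) = Σ_{p ∣ n prime} n/p` and `φ` is the Euler totient. -/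
theorem stmt_13 (n : ℕ) (hn : 2 ≤ n)
    (h : ∃ p q : ℕ, p.Prime ∧ q.Prime ∧ p ≠ q ∧ p ∣ n ∧ q ∣ n) :
    n < (∑ p ∈ n.primeFactors, n / p) + n.totient := by
  obtain ⟨p, q, hp, hq, hpq, hpn, hqn⟩ := h
  have hn0 : 0 < n := by omega
  set S := n.primeFactors with hSdef
  have hpS : p ∈ S := Nat.mem_primeFactors.mpr ⟨hp, hpn, hn0.ne'⟩
  have hqS : q ∈ S := Nat.mem_primeFactors.mpr ⟨hq, hqn, hn0.ne'⟩
  have hcard : 2 ≤ S.card := Finset.one_lt_card.mpr ⟨p, hpS, q, hqS, hpq⟩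
  have hprimes : ∀ r ∈ S, 2 ≤ r := fun r hr => (Nat.prime_of_mem_primeFactors hr).two_le
  have key := stmt_13_aux S hprimes ⟨p, hpS⟩
  have hlt : (∏ r ∈ S, r) < (∑ r ∈ S, ∏ t ∈ S.erase r, t) + ∏ r ∈ S, (r - 1) := by omega
  set P := ∏ r ∈ S, r with hP
  have hPpos : 0 < P := Finset.prod_pos fun r hr => by have := hprimes r hr; omega
  refine Nat.lt_of_mul_lt_mul_right (a := P) ?_
  have htot : n.totient * P = n * ∏ r ∈ S, (r - 1) := Nat.totient_mul_prod_primeFactors n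
  have hsum : (∑ r ∈ S, n / r) * P = n * ∑ r ∈ S, ∏ t ∈ S.erase r, t := by
    rw [Finset.sum_mul, Finset.mul_sum]
    refine Finset.sum_congr rfl fun r hr => ?_
    have hrn : r ∣ n := Nat.dvd_of_mem_primeFactors hr
    have hre : r * ∏ t ∈ S.erase r, t = P := Finset.mul_prod_erase S id hr
    calc n / r * P = n / r * (r * ∏ t ∈ S.erase r, t) := by rw [hre]
      _ = (n / r * r) * ∏ t ∈ S.erase r, t := by ring
      _ = n * ∏ t ∈ S.erase r, t := by rw [Nat.div_mul_cancel hrn]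
  rw [add_mul, htot, hsum, ← Nat.mul_add]
  exact Nat.mul_lt_mul_of_pos_left hlt hn0
end

section
/- Let F ∈ k[Y] be a strict Darboux polynomial of Δ with F ∉ k, of degree r, and with cofactor Λ = λ_0 y_0 + ⋯ + λ_{n−1} y_{n−1} (λ_i ∈ k). Then every λ_i is an integer satisfying −r ≤ λ_i ≤ 0, and at least two of the λ_i are nonzero. -/
open MvPolynomial

/-!
Write `Δ F = Λ F` as `∑ₛ yₛ Gₛ = 0` with `Gₛ = y_{s-1}∂_{s-1}F - yₛ∂ₛF - λₛF`; the coefficient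
of `y^γ` in `Gₛ` is `(γ_{s-1} - γₛ - λₛ)` times that in `F`. Fix `i` and let `y^α` be a monomial
of `F` minimising `α_{i-1} - αᵢ`. In the coefficient of `y^(α + eᵢ)` in `∑ₛ yₛ Gₛ` only `s = i`
contributes, since for `s ≠ i` the exponent `α + eᵢ - eₛ` would beat the minimum. Hence
`λᵢ = α_{i-1} - αᵢ`, an integer in `[-r, 0]`: a positive minimum would make `y_{i-1}` divide `F`.
If `λⱼ = 0` for all `j ≠ j₀`, every exponent of `F` satisfies `βⱼ ≤ β_{j-1}` for `j ≠ j₀`. Going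
once around the cycle from `j₀`, an exponent with `β_{j₀} = 0`, which exists by strictness,
vanishes, so `F` is constant.
-/

namespace MvPolynomial

variable {R σ : Type*} [CommSemiring R]

lemma coeff_X_mul_pderiv (i : σ) (p : MvPolynomial σ R) (m : σ →₀ ℕ) :
    coeff m (X i * pderiv i p) = m i * coeff m p := by
  classical
  induction p using MvPolynomial.induction_on' with
  | add p q hp hq => rw [map_add, mul_add, coeff_add, hp, hq, coeff_add, mul_add]
  | monomial u a =>
    rw [X_mul_pderiv_monomial, coeff_smul, coeff_monomial, nsmul_eq_mul]
    split_ifs with h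
    · rw [h]
    · rw [mul_zero, mul_zero]

lemma derivation_eq_sum_mul_pderiv [Fintype σ]
    (D : Derivation R (MvPolynomial σ R) (MvPolynomial σ R)) (p : MvPolynomial σ R) :
    D p = ∑ i, D (X i) * pderiv i p := by
  classical
  induction p using MvPolynomial.induction_on with
  | C a => simp only [derivation_C, mul_zero, Finset.sum_const_zero]
  | add p q hp hq => simp only [map_add, hp, hq, mul_add, Finset.sum_add_distrib]
  | mul_X p j hp =>
    simp only [Derivation.leibniz, hp, pderiv_X, smul_eq_mul, mul_add, Finset.sum_add_distrib,
      Pi.single_apply, mul_ite, mul_one, mul_zero, Finset.sum_ite_eq, Finset.mem_univ, if_true,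
      Finset.mul_sum]
    rw [mul_comm p]
    exact congrArg _ (Finset.sum_congr rfl fun i _ => mul_left_comm _ _ _)

lemma X_dvd_iff_forall_mem_support {i : σ} {p : MvPolynomial σ R} :
    X i ∣ p ↔ ∀ m ∈ p.support, m i ≠ 0 := by
  classical
  constructor
  · rintro ⟨q, rfl⟩ m hm
    rw [mem_support_iff, coeff_X_mul'] at hm
    split_ifs at hm with h
    · exact Finsupp.mem_support_iff.mp h
    · exact absurd rfl hm
  · intro h
    rw [← support_sum_monomial_coeff p]
    exact Finset.dvd_sum fun m hm => X_dvd_monomial.mpr (Or.inr (h m hm))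

lemma coeff_eq_zero_of_sum_X_mul_eq_zero [Fintype σ] [DecidableEq σ] {G : σ → MvPolynomial σ R}
    (hG : ∑ s, X s * G s = 0) {m : σ →₀ ℕ} {i : σ}
    (h : ∀ s ≠ i, coeff (m + Finsupp.single i 1 - Finsupp.single s 1) (G s) = 0) :
    coeff m (G i) = 0 := by
  have hcoeff := congrArg (coeff (m + Finsupp.single i 1)) hG
  rw [coeff_sum, coeff_zero, Finset.sum_eq_single i, coeff_X_mul', if_pos (by simp),
    add_tsub_cancel_right] at hcoeff
  · exact hcoeff
  · intro s _ hs
    rw [coeff_X_mul', h s hs, ite_self]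
  · simp

end MvPolynomial

namespace ZMod

lemma eq_zero_of_le_apply_sub_one {n : ℕ} [NeZero n] {f : ZMod n → ℕ} {j₀ : ZMod n}
    (h₀ : f j₀ = 0) (h : ∀ j ≠ j₀, f j ≤ f (j - 1)) (j : ZMod n) : f j = 0 := by
  have hstep : ∀ t : ℕ, f (j₀ + t) = 0 := by
    intro t
    induction t with
    | zero => simpa using h₀
    | succ t ih =>
      by_cases ht : j₀ + (t + 1 : ℕ) = j₀
      · rw [ht, h₀]
      · have hle := h _ ht
        rw [Nat.cast_succ, ← add_assoc, add_sub_cancel_right, ih] at hle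
        rw [Nat.cast_succ, ← add_assoc]
        omega
  simpa using hstep (j - j₀).val

end ZMod

section CyclicDerivation

variable {k : Type*} [Field k] {n : ℕ} [NeZero n]
  {Δ : Derivation k (MvPolynomial (ZMod n) k) (MvPolynomial (ZMod n) k)}
  {F : MvPolynomial (ZMod n) k} {lam : ZMod n → k}

lemma sum_X_mul_eq_zero_of_darboux (hΔ : ∀ j : ZMod n, Δ (X j) = X j * (X (j + 1) - X j))
    (hDarboux : Δ F = (∑ i : ZMod n, C (lam i) * X i) * F) :
    ∑ s, X s * (X (s - 1) * pderiv (s - 1) F - X s * pderiv s F - C (lam s) * F) = 0 := by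
  have hshift : ∑ s, X s * (X (s - 1) * pderiv (s - 1) F) =
      ∑ j, X (j + 1) * (X j * pderiv j F) := by
    rw [← Equiv.sum_comp (Equiv.addRight 1)]
    simp only [Equiv.coe_addRight, add_sub_cancel_right]
  have hexpand : Δ F =
      ∑ j, X (j + 1) * (X j * pderiv j F) - ∑ j, X j * (X j * pderiv j F) := by
    rw [derivation_eq_sum_mul_pderiv, ← Finset.sum_sub_distrib]
    exact Finset.sum_congr rfl fun j _ => by rw [hΔ]; ring
  simp only [mul_sub, Finset.sum_sub_distrib]
  rw [hshift, ← hexpand, hDarboux, Finset.sum_mul, sub_eq_zero]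
  exact Finset.sum_congr rfl fun i _ => by ring

lemma cofactor_eq_of_forall_le [Nontrivial (ZMod n)]
    (hΔ : ∀ j : ZMod n, Δ (X j) = X j * (X (j + 1) - X j))
    (hDarboux : Δ F = (∑ i : ZMod n, C (lam i) * X i) * F) {i : ZMod n} {α : ZMod n →₀ ℕ}
    (hα : α ∈ F.support)
    (hmin : ∀ β ∈ F.support, (α (i - 1) : ℤ) - α i ≤ (β (i - 1) : ℤ) - β i) :
    lam i = α (i - 1) - α i := by
  have hcoeff : ∀ s γ, coeff γ (X (s - 1) * pderiv (s - 1) F - X s * pderiv s F - C (lam s) * F)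
      = ((γ (s - 1) : k) - γ s - lam s) * coeff γ F := by
    intro s γ
    rw [coeff_sub, coeff_sub, coeff_X_mul_pderiv, coeff_X_mul_pderiv, coeff_C_mul]
    ring
  have hpred : i - 1 ≠ i := fun h => one_ne_zero (sub_eq_self.mp h)
  have hvan : ∀ s ≠ i, coeff (α + Finsupp.single i 1 - Finsupp.single s 1) F = 0 := by
    intro s hs
    by_contra hne
    have hle := hmin _ (mem_support_iff.mpr hne)
    simp only [Finsupp.tsub_apply, Finsupp.add_apply, Finsupp.single_apply, if_neg hs,
      if_neg hpred.symm, if_true] at hle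
    omega
  have hGi := coeff_eq_zero_of_sum_X_mul_eq_zero (sum_X_mul_eq_zero_of_darboux hΔ hDarboux)
    (m := α) fun s hs => by rw [hcoeff, hvan s hs, mul_zero]
  rw [hcoeff] at hGi
  linear_combination -(mul_eq_zero.mp hGi).resolve_right (mem_support_iff.mp hα)

lemma exists_mem_support_cofactor_eq [Nontrivial (ZMod n)]
    (hΔ : ∀ j : ZMod n, Δ (X j) = X j * (X (j + 1) - X j))
    (hDarboux : Δ F = (∑ i : ZMod n, C (lam i) * X i) * F) (hF0 : F ≠ 0) (i : ZMod n) :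
    ∃ α ∈ F.support, lam i = (((α (i - 1) : ℤ) - α i : ℤ) : k) ∧
      ∀ β ∈ F.support, (α (i - 1) : ℤ) - α i ≤ (β (i - 1) : ℤ) - β i := by
  obtain ⟨α, hα, hmin⟩ := F.support.exists_min_image (fun β => (β (i - 1) : ℤ) - β i)
    (support_nonempty.mpr hF0)
  refine ⟨α, hα, ?_, hmin⟩
  rw [cofactor_eq_of_forall_le hΔ hDarboux hα hmin]
  push_cast
  rfl

lemma exists_int_cofactor_eq [Nontrivial (ZMod n)] {r : ℕ}
    (hΔ : ∀ j : ZMod n, Δ (X j) = X j * (X (j + 1) - X j))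
    (hDarboux : Δ F = (∑ i : ZMod n, C (lam i) * X i) * F) (hF0 : F ≠ 0)
    (hFhom : F.IsHomogeneous r) (hstrict : ∀ j : ZMod n, ¬ X j ∣ F) (i : ZMod n) :
    ∃ m : ℤ, lam i = (m : k) ∧ -(r : ℤ) ≤ m ∧ m ≤ 0 := by
  obtain ⟨α, hα, hlam, hmin⟩ := exists_mem_support_cofactor_eq hΔ hDarboux hF0 i
  refine ⟨_, hlam, ?_, ?_⟩
  · have hdeg : α.degree = r := by
      by_contra h
      exact mem_support_iff.mp hα (hFhom.coeff_eq_zero h)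
    have := Finsupp.le_degree i α
    omega
  · by_contra! hpos
    refine hstrict (i - 1) (X_dvd_iff_forall_mem_support.mpr fun β hβ => ?_)
    have := hmin β hβ
    omega

lemma le_apply_sub_one_of_cofactor_eq_zero [CharZero k] [Nontrivial (ZMod n)]
    (hΔ : ∀ j : ZMod n, Δ (X j) = X j * (X (j + 1) - X j))
    (hDarboux : Δ F = (∑ i : ZMod n, C (lam i) * X i) * F) (hF0 : F ≠ 0) {i : ZMod n}
    (hi : lam i = 0) {β : ZMod n →₀ ℕ} (hβ : β ∈ F.support) : β i ≤ β (i - 1) := by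
  obtain ⟨α, -, hlam, hmin⟩ := exists_mem_support_cofactor_eq hΔ hDarboux hF0 i
  rw [hi, eq_comm, Int.cast_eq_zero] at hlam
  have := hmin β hβ
  omega

lemma exists_ne_cofactor_ne_zero [CharZero k] [Nontrivial (ZMod n)] {r : ℕ}
    (hΔ : ∀ j : ZMod n, Δ (X j) = X j * (X (j + 1) - X j))
    (hDarboux : Δ F = (∑ i : ZMod n, C (lam i) * X i) * F) (hF0 : F ≠ 0)
    (hFhom : F.IsHomogeneous r) (hFk : F ∉ Set.range (C : k → MvPolynomial (ZMod n) k))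
    (hstrict : ∀ j : ZMod n, ¬ X j ∣ F) :
    ∃ i j : ZMod n, i ≠ j ∧ lam i ≠ 0 ∧ lam j ≠ 0 := by
  by_contra! hcon
  obtain ⟨j₀, hj₀⟩ : ∃ j₀, ∀ j ≠ j₀, lam j = 0 := by
    by_cases hall : ∃ j₀, lam j₀ ≠ 0
    · obtain ⟨j₀, hj₀⟩ := hall
      exact ⟨j₀, fun j hj => hcon j₀ j (Ne.symm hj) hj₀⟩
    · exact ⟨0, fun j _ => by_contra fun h => hall ⟨j, h⟩⟩
  obtain ⟨α, hα, hαj₀⟩ : ∃ α ∈ F.support, α j₀ = 0 := by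
    by_contra! h
    exact hstrict j₀ (X_dvd_iff_forall_mem_support.mpr h)
  have hα0 : α = 0 := Finsupp.ext <| ZMod.eq_zero_of_le_apply_sub_one hαj₀ fun j hj =>
    le_apply_sub_one_of_cofactor_eq_zero hΔ hDarboux hF0 (hj₀ j hj) hα
  have hr : F.totalDegree = 0 := by
    have hr := hFhom (mem_support_iff.mp hα)
    rw [hα0, map_zero] at hr
    rw [hFhom.totalDegree hF0, ← hr]
  exact hFk ⟨_, (totalDegree_eq_zero_iff_eq_C.mp hr).symm⟩

end CyclicDerivation

/-- Let `Δ` be the factorisable derivation of `k[y_0,…,y_{n-1}]` with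
`Δ(y_j) = y_j(y_{j+1} - y_j)` (indices mod `n`). If `F ∉ k` is a strict Darboux polynomial
of `Δ` (a nonzero homogeneous polynomial, divisible by none of the variables, with
`Δ(F) = Λ·F` for the linear cofactor `Λ = Σ λ_i y_i`), of degree `r`, then every `λ_i` is
an integer with `-r ≤ λ_i ≤ 0`, and at least two of the `λ_i` are nonzero. -/
theorem stmt_17 {k : Type*} [Field k] [CharZero k] (n : ℕ) (hn : 3 ≤ n) [NeZero n]
    (Δ : Derivation k (MvPolynomial (ZMod n) k) (MvPolynomial (ZMod n) k))
    (hΔ : ∀ j : ZMod n, Δ (X j) = X j * (X (j + 1) - X j))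
    (F : MvPolynomial (ZMod n) k) (r : ℕ)
    (hF0 : F ≠ 0) (hFhom : F.IsHomogeneous r)
    (hFk : F ∉ Set.range (C : k → MvPolynomial (ZMod n) k))
    (hstrict : ∀ j : ZMod n, ¬ X j ∣ F)
    (lam : ZMod n → k)
    (hDarboux : Δ F = (∑ i : ZMod n, C (lam i) * X i) * F) :
    (∀ i : ZMod n, ∃ m : ℤ, lam i = (m : k) ∧ -(r : ℤ) ≤ m ∧ m ≤ 0) ∧
    ∃ i j : ZMod n, i ≠ j ∧ lam i ≠ 0 ∧ lam j ≠ 0 := by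
  have : Fact (1 < n) := ⟨by omega⟩
  exact ⟨exists_int_cofactor_eq hΔ hDarboux hF0 hFhom hstrict,
    exists_ne_cofactor_ne_zero hΔ hDarboux hF0 hFhom hFk hstrict⟩
end
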